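/- arXiv:1308.4626 — 7 statements merged into one kernel-verified Lean document; each statement's English description precedes it below -/
import Mathlib

section
/- Let f be a probability density on ℝ with ∫_{1/2}^∞ dy/(y³ f(y)) < ∞, and for each integer n ≥ 1 set q_n := ∫_{n−1/2}^{n+1/2} f(y) dy. Then q_n > 0 for all n ≥ 1 and ∑_{n≥1} 1/((n + 1/2)³ q_n) ≤ ∫_{1/2}^∞ dy/(y³ f(y)) < ∞. -/
/-!
On each interval `[n - 1/2, n + 1/2)` of length one, Jensen's inequality for the convex
function `x ↦ 1/x` (taken in `ℝ≥0∞`, where `1/0 = ∞`, and proved by integrating a tangent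
line) gives `1 / q_n ≤ ∫ dy / f(y)`, and `y³ ≤ (n + 1/2)³` there. Summing over the intervals,
which tile `[1/2, ∞)`, bounds the series by the integral; in particular every term is finite,
so `q_n > 0`.
-/

open MeasureTheory Set
open scoped ENNReal

namespace ENNReal

/-- The tangent line of `x ↦ x⁻¹` at `a⁻¹` lies below its graph. -/
theorem two_mul_le_inv_add_mul_sq {a : ℝ≥0∞} (ha : a ≠ ∞) (x : ℝ≥0∞) :
    2 * a ≤ x⁻¹ + x * a ^ 2 := by
  rcases eq_or_ne x 0 with rfl | hx0
  · simp
  rcases eq_or_ne a 0 with rfl | ha0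
  · simp
  rcases eq_or_ne x ∞ with rfl | hx
  · simp [ENNReal.top_mul (pow_ne_zero 2 ha0)]
  lift x to NNReal using hx
  lift a to NNReal using ha
  have hx0' : x ≠ 0 := by exact_mod_cast hx0
  rw [← ENNReal.coe_inv hx0']
  norm_cast
  rw [← NNReal.coe_le_coe]
  push_cast [NNReal.coe_inv]
  have hxpos : (0 : ℝ) < x := by positivity
  have hsq : (x : ℝ)⁻¹ + x * a ^ 2 - 2 * a = (x : ℝ)⁻¹ * (x * a - 1) ^ 2 := by
    field_simp
    ring
  rw [← sub_nonneg, hsq]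
  positivity

end ENNReal

namespace MeasureTheory

variable {α : Type*} [MeasurableSpace α] {μ : Measure α} [IsProbabilityMeasure μ]

theorem inv_lintegral_le_lintegral_inv {h : α → ℝ≥0∞} (hh : AEMeasurable h μ) :
    (∫⁻ x, h x ∂μ)⁻¹ ≤ ∫⁻ x, (h x)⁻¹ ∂μ := by
  set A := ∫⁻ x, h x ∂μ
  rcases eq_or_ne A 0 with hA0 | hA0
  · have h_inv_top : ∀ᵐ x ∂μ, (h x)⁻¹ = ∞ := by
      filter_upwards [(lintegral_eq_zero_iff' hh).1 hA0] with x hx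
      simp [hx]
    simp [lintegral_congr_ae h_inv_top]
  have hA_inv : A⁻¹ ≠ ∞ := ENNReal.inv_ne_top.2 hA0
  have key : A⁻¹ + A⁻¹ ≤ ∫⁻ x, (h x)⁻¹ ∂μ + A⁻¹ := calc
    A⁻¹ + A⁻¹ = ∫⁻ _, 2 * A⁻¹ ∂μ := by simp [two_mul]
    _ ≤ ∫⁻ x, ((h x)⁻¹ + h x * A⁻¹ ^ 2) ∂μ :=
      lintegral_mono fun x => ENNReal.two_mul_le_inv_add_mul_sq hA_inv (h x)
    _ = ∫⁻ x, (h x)⁻¹ ∂μ + A * A⁻¹ * A⁻¹ := by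
      rw [lintegral_add_right' _ (hh.mul_const _), lintegral_mul_const'' _ hh, sq, mul_assoc]
    _ ≤ ∫⁻ x, (h x)⁻¹ ∂μ + A⁻¹ := by
      gcongr
      calc A * A⁻¹ * A⁻¹ ≤ 1 * A⁻¹ := by gcongr; exact ENNReal.mul_inv_le_one A
        _ = A⁻¹ := one_mul _
  exact (ENNReal.add_le_add_iff_right hA_inv).1 key

theorem inv_ofReal_integral_le_lintegral_inv_ofReal {F : α → ℝ} (hF : Integrable F μ)
    (hF0 : 0 ≤ᵐ[μ] F) :
    (ENNReal.ofReal (∫ x, F x ∂μ))⁻¹ ≤ ∫⁻ x, (ENNReal.ofReal (F x))⁻¹ ∂μ := by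
  rw [ofReal_integral_eq_lintegral_ofReal hF hF0]
  exact inv_lintegral_le_lintegral_inv hF.aemeasurable.ennreal_ofReal

end MeasureTheory

instance Real.isProbabilityMeasure_restrict_Ico_add_one (a : ℝ) :
    IsProbabilityMeasure (volume.restrict (Ico a (a + 1))) :=
  ⟨by simp⟩

theorem Set.Ici_eq_iUnion_Ico_natCast_add {α : Type*} [Field α] [LinearOrder α]
    [IsStrictOrderedRing α] [FloorSemiring α] (a : α) :
    Ici a = ⋃ n : ℕ, Ico (n + a) (n + a + 1) := by
  ext y
  simp only [mem_Ici, mem_iUnion, mem_Ico]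
  constructor
  · intro hy
    have hy' : 0 ≤ y - a := sub_nonneg.2 hy
    refine ⟨⌊y - a⌋₊, ?_, ?_⟩
    · linarith [Nat.floor_le hy']
    · linarith [Nat.lt_floor_add_one (y - a)]
  · rintro ⟨n, hn, -⟩
    linarith [(Nat.cast_nonneg n : (0 : α) ≤ n)]

theorem lintegral_Ici_eq_tsum_Ico (a : ℝ) (g : ℝ → ℝ≥0∞) :
    ∫⁻ y in Ici a, g y = ∑' n : ℕ, ∫⁻ y in Ico (n + a) (n + a + 1), g y := by
  rw [Set.Ici_eq_iUnion_Ico_natCast_add a, lintegral_iUnion (fun _ => measurableSet_Ico)]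
  simpa [add_right_comm] using
    (Nat.mono_cast.add_const a : Monotone fun n : ℕ => (n : ℝ) + a).pairwise_disjoint_on_Ico_succ

theorem inv_ofReal_pow_mul_intervalIntegral_le {a : ℝ} (ha : 0 ≤ a) (p : ℕ) {f : ℝ → ℝ}
    (hf_nonneg : ∀ y ∈ Ico a (a + 1), 0 ≤ f y) (hf : IntegrableOn f (Ico a (a + 1))) :
    (ENNReal.ofReal ((a + 1) ^ p * ∫ y in a..a + 1, f y))⁻¹
      ≤ ∫⁻ y in Ico a (a + 1), (ENNReal.ofReal (y ^ p * f y))⁻¹ := by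
  rw [intervalIntegral.integral_of_le (by linarith), ← integral_Ico_eq_integral_Ioc,
    ← integral_const_mul]
  refine (inv_ofReal_integral_le_lintegral_inv_ofReal (hf.const_mul _)
    ((ae_restrict_iff' measurableSet_Ico).2 (ae_of_all _ fun y hy =>
      mul_nonneg (by positivity) (hf_nonneg y hy)))).trans ?_
  refine setLIntegral_mono' measurableSet_Ico fun y hy => ?_
  gcongr
  exacts [hf_nonneg y hy, ha.trans hy.1, hy.2.le]

theorem tsum_inv_ofReal_pow_mul_intervalIntegral_le_lintegral_Ici (p : ℕ) {f : ℝ → ℝ}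
    (hf_nonneg : ∀ y ∈ Ici (2⁻¹ : ℝ), 0 ≤ f y) (hf : IntegrableOn f (Ici 2⁻¹)) :
    ∑' n : ℕ, (ENNReal.ofReal
        ((((n : ℝ) + 1) + 2⁻¹) ^ p *
          ∫ y in (((n : ℝ) + 1) - 2⁻¹)..(((n : ℝ) + 1) + 2⁻¹), f y))⁻¹
      ≤ ∫⁻ y in Ici (2⁻¹ : ℝ), (ENNReal.ofReal (y ^ p * f y))⁻¹ := by
  rw [lintegral_Ici_eq_tsum_Ico]
  refine ENNReal.tsum_le_tsum fun n => ?_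
  have hsub : Ico ((n : ℝ) + 2⁻¹) (n + 2⁻¹ + 1) ⊆ Ici 2⁻¹ := fun y hy => by
    simp only [mem_Ico, mem_Ici] at hy ⊢
    linarith [(Nat.cast_nonneg n : (0 : ℝ) ≤ n)]
  rw [show (n : ℝ) + 1 + 2⁻¹ = n + 2⁻¹ + 1 by ring, show (n : ℝ) + 1 - 2⁻¹ = n + 2⁻¹ by ring]
  exact inv_ofReal_pow_mul_intervalIntegral_le (by positivity) p
    (fun y hy => hf_nonneg y (hsub hy)) (hf.mono_set hsub)

theorem discretization_jensen_bound_general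
    (f : ℝ → ℝ) (hf_nonneg : ∀ y, 0 ≤ f y)
    (hf_int : Integrable f (volume : Measure ℝ))
    (hI : ∫⁻ y in Set.Ici (2⁻¹ : ℝ), (ENNReal.ofReal (y ^ 3 * f y))⁻¹ < ⊤) :
    (∀ n : ℕ, 1 ≤ n →
      0 < ∫ y in ((n : ℝ) - 2⁻¹)..((n : ℝ) + 2⁻¹), f y) ∧
    ∑' n : ℕ, (ENNReal.ofReal
        ((((n : ℝ) + 1) + 2⁻¹) ^ 3 *
          ∫ y in (((n : ℝ) + 1) - 2⁻¹)..(((n : ℝ) + 1) + 2⁻¹), f y))⁻¹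
      ≤ ∫⁻ y in Set.Ici (2⁻¹ : ℝ), (ENNReal.ofReal (y ^ 3 * f y))⁻¹ := by
  have hsum := tsum_inv_ofReal_pow_mul_intervalIntegral_le_lintegral_Ici 3
    (fun y _ => hf_nonneg y) hf_int.integrableOn
  refine ⟨fun n hn => ?_, hsum⟩
  obtain ⟨k, rfl⟩ := Nat.exists_eq_add_of_le' hn
  have hterm_fin := (ENNReal.le_tsum k).trans_lt (hsum.trans_lt hI)
  rw [ENNReal.inv_lt_top, ENNReal.ofReal_pos] at hterm_fin
  exact_mod_cast pos_of_mul_pos_right hterm_fin (by positivity)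

/-- if `f` is a probability density with `∫_{1/2}^∞ dy/(y³ f(y)) < ∞`
and `qₙ = ∫_{n-1/2}^{n+1/2} f(y) dy`, then `qₙ > 0` for `n ≥ 1` and
`∑_{n≥1} 1/((n+1/2)³ qₙ) ≤ ∫_{1/2}^∞ dy/(y³ f(y))`. -/
theorem discretization_jensen_bound
    (f : ℝ → ℝ) (hf_meas : Measurable f) (hf_nonneg : ∀ y, 0 ≤ f y)
    (hf_int : Integrable f (volume : Measure ℝ))
    (hf_prob : ∫ y, f y = 1)
    (hI : ∫⁻ y in Set.Ici (2⁻¹ : ℝ), (ENNReal.ofReal (y ^ 3 * f y))⁻¹ < ⊤) :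
    (∀ n : ℕ, 1 ≤ n →
      0 < ∫ y in ((n : ℝ) - 2⁻¹)..((n : ℝ) + 2⁻¹), f y) ∧
    ∑' n : ℕ, (ENNReal.ofReal
        ((((n : ℝ) + 1) + 2⁻¹) ^ 3 *
          ∫ y in (((n : ℝ) + 1) - 2⁻¹)..(((n : ℝ) + 1) + 2⁻¹), f y))⁻¹
      ≤ ∫⁻ y in Set.Ici (2⁻¹ : ℝ), (ENNReal.ofReal (y ^ 3 * f y))⁻¹ :=
  discretization_jensen_bound_general f hf_nonneg hf_int hI
end

section
/- The function θ : ℤ × ℤ → ℝ defined below is a unit flow on ℤ from 0 to infinity; that is: (i) θ(v,u) = −θ(u,v) for all u, v ∈ ℤ; (ii) ∑_{v∈ℤ} θ(u,v) = 0 for every u ≠ 0; and (iii) ∑_{v∈ℤ} θ(0,v) = 1. -/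
/-- The index of the block of `ℤ` containing `u`, where `B_0 = {0}`,
`B_i = {2^(i-1), …, 2^i - 1}` and `B_{-i} = -B_i` for `i ≥ 1`. -/
def blockIdx (u : ℤ) : ℤ :=
  if u = 0 then 0
  else if 0 < u then (Nat.log 2 u.toNat : ℤ) + 1
  else -((Nat.log 2 (-u).toNat : ℤ) + 1)

/-- The flow `θ` on `ℤ` from `0` to infinity: for `u ∈ B_i`, `v ∈ B_j`,
`θ(u,v) = 1/2` if `i = 0` and `j = ±1`; `θ(u,v) = 2^(-2|i|)` if `0 < i`, `j = i+1`
or `i < 0`, `j = i-1`; `θ(u,v) = 0` if `i = j` or `|i-j| ≥ 2`; and antisymmetry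
`θ(u,v) = -θ(v,u)` in the remaining cases. -/
noncomputable def theta (u v : ℤ) : ℝ :=
  let i := blockIdx u
  let j := blockIdx v
  if i = 0 ∧ (j = 1 ∨ j = -1) then 1 / 2
  else if j = 0 ∧ (i = 1 ∨ i = -1) then -(1 / 2)
  else if 0 < i ∧ j = i + 1 then (2 : ℝ) ^ (-(2 * i))
  else if i < 0 ∧ j = i - 1 then (2 : ℝ) ^ (2 * i)
  else if 0 < j ∧ i = j + 1 then -((2 : ℝ) ^ (-(2 * j)))
  else if j < 0 ∧ i = j - 1 then -((2 : ℝ) ^ (2 * j))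
  else 0

noncomputable def thetaIdx (i j : ℤ) : ℝ :=
  if i = 0 ∧ (j = 1 ∨ j = -1) then 1 / 2
  else if j = 0 ∧ (i = 1 ∨ i = -1) then -(1 / 2)
  else if 0 < i ∧ j = i + 1 then (2 : ℝ) ^ (-(2 * i))
  else if i < 0 ∧ j = i - 1 then (2 : ℝ) ^ (2 * i)
  else if 0 < j ∧ i = j + 1 then -((2 : ℝ) ^ (-(2 * j)))
  else if j < 0 ∧ i = j - 1 then -((2 : ℝ) ^ (2 * j))
  else 0


lemma theta_def (u v : ℤ) : theta u v = thetaIdx (blockIdx u) (blockIdx v) := rfl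

lemma thetaIdx_anti (i j : ℤ) : thetaIdx j i = -thetaIdx i j := by
  unfold thetaIdx
  split_ifs <;> first | ring1 | (exfalso; omega)

lemma blockIdx_neg (v : ℤ) : blockIdx (-v) = -blockIdx v := by
  unfold blockIdx
  split_ifs <;> simp_all <;> omega

lemma blockIdx_pos_iff (k : ℕ) (v : ℤ) :
    blockIdx v = (k : ℤ) + 1 ↔ (2 ^ k : ℤ) ≤ v ∧ v < 2 ^ (k + 1) := by
  rcases le_or_gt v 0 with hv | hv
  · constructor
    · intro h
      exfalso
      unfold blockIdx at h
      split_ifs at h <;> omega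
    · intro ⟨h1, _⟩
      exfalso
      have : (0:ℤ) < 2 ^ k := by positivity
      omega
  · have hvt : v.toNat ≠ 0 := by omega
    unfold blockIdx
    rw [if_neg (by omega), if_pos hv]
    have hlog := Nat.log_eq_iff (b := 2) (n := v.toNat) (m := k) (Or.inr ⟨by norm_num, hvt⟩)
    constructor
    · intro h
      have hk : Nat.log 2 v.toNat = k := by omega
      rw [hk] at hlog
      have := hlog.mp rfl
      constructor <;> [skip; skip] <;>
        · zify at this; omega
    · intro ⟨h1, h2⟩
      have : 2 ^ k ≤ v.toNat ∧ v.toNat < 2 ^ (k + 1) := by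
        constructor <;> zify <;> omega
      have := hlog.mpr this
      omega

lemma blockIdx_eq_zero (v : ℤ) : blockIdx v = 0 ↔ v = 0 := by
  unfold blockIdx
  split_ifs <;> omega

lemma thetaIdx_neg_neg (i j : ℤ) : thetaIdx (-i) (-j) = thetaIdx i j := by
  unfold thetaIdx
  split_ifs <;>
    first
      | rfl
      | (exfalso; omega)
      | (congr 1; omega)
      | (congr 2; omega)

lemma theta_neg_neg (u v : ℤ) : theta (-u) (-v) = theta u v := by
  rw [theta_def, theta_def, blockIdx_neg, blockIdx_neg, thetaIdx_neg_neg]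

lemma theta_vanish (k : ℕ) (u v : ℤ) (hu : blockIdx u = (k : ℤ) + 1)
    (h1 : blockIdx v ≠ (k : ℤ)) (h2 : blockIdx v ≠ (k : ℤ) + 2) : theta u v = 0 := by
  rw [theta_def, hu]
  unfold thetaIdx
  split_ifs <;> first | rfl | (exfalso; omega)

lemma theta_upper (k : ℕ) (u v : ℤ) (hu : blockIdx u = (k : ℤ) + 1)
    (hv : blockIdx v = (k : ℤ) + 2) : theta u v = (2 : ℝ) ^ (-(2 * ((k : ℤ) + 1))) := by
  rw [theta_def, hu, hv]
  unfold thetaIdx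
  split_ifs <;> first | rfl | (congr 1; omega) | (exfalso; omega)

lemma theta_lower0 (u v : ℤ) (hu : blockIdx u = 1) (hv : blockIdx v = 0) :
    theta u v = -(1 / 2) := by
  rw [theta_def, hu, hv]
  unfold thetaIdx
  split_ifs <;> first | rfl | (exfalso; omega)

lemma theta_lower (k : ℕ) (u v : ℤ) (hu : blockIdx u = (k : ℤ) + 2)
    (hv : blockIdx v = (k : ℤ) + 1) : theta u v = -((2 : ℝ) ^ (-(2 * ((k : ℤ) + 1)))) := by
  rw [theta_def, hu, hv]
  unfold thetaIdx
  split_ifs <;> first | rfl | (congr 2; omega) | (exfalso; omega)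

lemma card_Ico_pow (m : ℕ) : (Finset.Ico ((2:ℤ)^m) ((2:ℤ)^(m+1))).card = 2^m := by
  rw [Int.card_Ico]
  have h1 : (2:ℤ)^(m+1) - 2^m = ((2^m : ℕ) : ℤ) := by push_cast; ring
  rw [h1, Int.toNat_natCast]

lemma div_pos_case (u : ℤ) (hu : 0 < u) : ∑' v : ℤ, theta u v = 0 := by
  have hbu : blockIdx u = (Nat.log 2 u.toNat : ℤ) + 1 := by
    unfold blockIdx
    rw [if_neg (by omega), if_pos hu]
  set k := Nat.log 2 u.toNat with hk
  clear_value k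
  cases k with
  | zero =>
    have hsum : ∑' v : ℤ, theta u v = ∑ v ∈ ({0, 2, 3} : Finset ℤ), theta u v := by
      apply tsum_eq_sum
      intro v hv
      simp only [Finset.mem_insert, Finset.mem_singleton] at hv
      push_neg at hv
      apply theta_vanish 0 u v (by exact_mod_cast hbu)
      · intro h
        exact hv.1 ((blockIdx_eq_zero v).mp (by exact_mod_cast h))
      · intro h
        have := (blockIdx_pos_iff 1 v).mp (by exact_mod_cast h)
        norm_num at this
        omega
    rw [hsum]
    have h0 : blockIdx (0:ℤ) = 0 := (blockIdx_eq_zero 0).mpr rfl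
    have h2 : blockIdx (2:ℤ) = 2 := by
      have := (blockIdx_pos_iff 1 2).mpr (by norm_num)
      exact_mod_cast this
    have h3 : blockIdx (3:ℤ) = 2 := by
      have := (blockIdx_pos_iff 1 3).mpr (by norm_num)
      exact_mod_cast this
    have e0 : theta u 0 = -(1/2) := theta_lower0 u 0 (by exact_mod_cast hbu) h0
    have e2 : theta u 2 = (2:ℝ) ^ (-(2 * ((0:ℤ) + 1))) :=
      theta_upper 0 u 2 (by exact_mod_cast hbu) (by exact_mod_cast h2)
    have e3 : theta u 3 = (2:ℝ) ^ (-(2 * ((0:ℤ) + 1))) :=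
      theta_upper 0 u 3 (by exact_mod_cast hbu) (by exact_mod_cast h3)
    rw [Finset.sum_insert (by norm_num), Finset.sum_insert (by norm_num),
      Finset.sum_singleton, e0, e2, e3]
    norm_num
  | succ m =>
    set S1 : Finset ℤ := Finset.Ico ((2:ℤ)^m) ((2:ℤ)^(m+1)) with hS1
    set S2 : Finset ℤ := Finset.Ico ((2:ℤ)^(m+2)) ((2:ℤ)^(m+3)) with hS2
    have hpow : (2:ℤ)^(m+1) ≤ (2:ℤ)^(m+2) := by
      apply pow_le_pow_right₀ (by norm_num) (by omega)
    have hdisj : Disjoint S1 S2 := by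
      rw [Finset.disjoint_left]
      intro a ha hb
      rw [hS1, Finset.mem_Ico] at ha
      rw [hS2, Finset.mem_Ico] at hb
      omega
    have hmem1 : ∀ v : ℤ, blockIdx v = (m:ℤ) + 1 ↔ v ∈ S1 := by
      intro v
      rw [hS1, Finset.mem_Ico]
      exact blockIdx_pos_iff m v
    have hmem2 : ∀ v : ℤ, blockIdx v = (m:ℤ) + 3 ↔ v ∈ S2 := by
      intro v
      rw [hS2, Finset.mem_Ico]
      have := blockIdx_pos_iff (m + 2) v
      push_cast at this ⊢
      convert this using 2 <;> ring_nf
    have hbu' : blockIdx u = ((m + 1 : ℕ) : ℤ) + 1 := by exact_mod_cast hbu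
    have hsum : ∑' v : ℤ, theta u v = ∑ v ∈ S1 ∪ S2, theta u v := by
      apply tsum_eq_sum
      intro v hv
      rw [Finset.mem_union] at hv
      push_neg at hv
      apply theta_vanish (m+1) u v hbu'
      · intro h
        exact hv.1 ((hmem1 v).mp (by push_cast at h ⊢; omega))
      · intro h
        exact hv.2 ((hmem2 v).mp (by push_cast at h ⊢; omega))
    rw [hsum, Finset.sum_union hdisj]
    have hval1 : ∀ v ∈ S1, theta u v = -((2 : ℝ) ^ (-(2 * ((m : ℤ) + 1)))) := by
      intro v hv
      exact theta_lower m u v (by push_cast at hbu' ⊢; omega) ((hmem1 v).mpr hv)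
    have hval2 : ∀ v ∈ S2, theta u v = (2 : ℝ) ^ (-(2 * ((m : ℤ) + 2))) := by
      intro v hv
      have := theta_upper (m+1) u v hbu' (by push_cast; have := (hmem2 v).mpr hv; push_cast at this; omega)
      rw [this]
      congr 1 <;> push_cast <;> try ring
    rw [Finset.sum_congr rfl hval1, Finset.sum_congr rfl hval2,
      Finset.sum_const, Finset.sum_const, hS1, hS2, card_Ico_pow]
    have hcard2 : (Finset.Ico ((2:ℤ)^(m+2)) ((2:ℤ)^(m+3))).card = 2^(m+2) :=
      card_Ico_pow (m+2)
    rw [hcard2]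
    rw [nsmul_eq_mul, nsmul_eq_mul]
    push_cast
    rw [show ((2:ℝ)^m) = (2:ℝ)^(m:ℤ) from (zpow_natCast 2 m).symm,
      show ((2:ℝ)^(m+2)) = (2:ℝ)^((m:ℤ)+2) from by rw [← zpow_natCast]; push_cast; ring_nf]
    rw [mul_neg, ← zpow_add₀ (two_ne_zero), ← zpow_add₀ (two_ne_zero)]
    rw [show (m:ℤ) + -(2 * ((m:ℤ) + 1)) = -((m:ℤ)+2) by ring,
      show (m:ℤ) + 2 + -(2 * ((m:ℤ) + 2)) = -((m:ℤ)+2) by ring]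
    ring

lemma thetaIdx_zero_vanish (j : ℤ) (h1 : j ≠ 1) (h2 : j ≠ -1) : thetaIdx 0 j = 0 := by
  unfold thetaIdx
  split_ifs <;> first | rfl | (exfalso; omega) | (exfalso; simp_all)

lemma blockIdx_eq_one (v : ℤ) : blockIdx v = 1 ↔ v = 1 := by
  have h := blockIdx_pos_iff 0 v
  simp only [Nat.cast_zero, zero_add, pow_zero, pow_one] at h
  rw [h]
  omega

lemma blockIdx_eq_neg_one (v : ℤ) : blockIdx v = -1 ↔ v = -1 := by
  constructor
  · intro h
    have : blockIdx (-v) = 1 := by rw [blockIdx_neg]; omega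
    rw [blockIdx_eq_one] at this
    omega
  · intro h
    subst h
    have : blockIdx (-(-1:ℤ)) = 1 := (blockIdx_eq_one _).mpr (by norm_num)
    rw [blockIdx_neg] at this
    omega

/-- `θ` is a unit flow on ℤ from `0` to infinity: it is antisymmetric,
its divergence vanishes at every `u ≠ 0`, and the total flow out of `0` is `1`. -/
theorem theta_is_unit_flow :
    (∀ u v : ℤ, theta v u = -theta u v) ∧
    (∀ u : ℤ, u ≠ 0 → ∑' v : ℤ, theta u v = 0) ∧
    (∑' v : ℤ, theta 0 v = 1) := by
  refine ⟨fun u v => by rw [theta_def, theta_def]; exact thetaIdx_anti _ _, ?_, ?_⟩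
  · intro u hu
    rcases lt_trichotomy u 0 with h | h | h
    · have key : ∀ v : ℤ, theta u v = theta (-u) (-v) := by
        intro v
        have := theta_neg_neg (-u) (-v)
        simpa using this
      calc ∑' v : ℤ, theta u v = ∑' v : ℤ, theta (-u) (-v) := by
            exact tsum_congr key
        _ = ∑' v : ℤ, theta (-u) v := by
            exact (Equiv.neg ℤ).tsum_eq (fun v => theta (-u) v)
        _ = 0 := div_pos_case (-u) (by omega)
    · exact absurd h hu
    · exact div_pos_case u h
  · have h0 : blockIdx 0 = 0 := (blockIdx_eq_zero 0).mpr rfl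
    have hsum : ∑' v : ℤ, theta 0 v = ∑ v ∈ ({-1, 1} : Finset ℤ), theta 0 v := by
      apply tsum_eq_sum
      intro v hv
      simp only [Finset.mem_insert, Finset.mem_singleton] at hv
      push_neg at hv
      rw [theta_def, h0]
      apply thetaIdx_zero_vanish
      · intro h; exact hv.2 ((blockIdx_eq_one v).mp h)
      · intro h; exact hv.1 ((blockIdx_eq_neg_one v).mp h)
    rw [hsum, Finset.sum_insert (by norm_num), Finset.sum_singleton]
    have e1 : theta 0 (-1) = 1/2 := by
      rw [theta_def, h0, (blockIdx_eq_neg_one (-1)).mpr rfl]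
      unfold thetaIdx
      norm_num
    have e2 : theta 0 1 = 1/2 := by
      rw [theta_def, h0, (blockIdx_eq_one 1).mpr rfl]
      unfold thetaIdx
      norm_num
    rw [e1, e2]
    norm_num
end

section
/- Let θ : ℤ × ℤ → ℝ be the flow defined below. Then for every integer w ≥ 4, ∑_{u ≥ ⌈w/3⌉, u ≠ 1} θ(u, u+w)² ≤ 144/(w − 3)³, and for w ∈ {2, 3}, ∑_{u ≥ 1, u ≠ 1} θ(u, u+w)² ≤ 16/3. -/
/-!
For `u ≥ 2` the block index `i` of `u` is at least `2`, every nonzero value of `θ(u, ·)`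
is `±2^(-2k)` with `k ≥ i - 1`, and `u < 2^i`; hence `θ(u, v)² ≤ 16 / u⁴`. The tail of
`∑ 1 / u⁴` from `m` is bounded by `1 / (3 (m - 1)³)` by telescoping against `1 / (3 x³)`.
With `m = ⌈w/3⌉` one has `w - 3 ≤ 3 (m - 1)`, which turns `16 / (3 (m - 1)³)` into
`144 / (w - 3)³`; for `w ∈ {2, 3}` take `m = 2`.
-/

lemma blockIdx_of_pos {u : ℤ} (hu : 0 < u) : blockIdx u = Nat.log 2 u.toNat + 1 := by
  rw [blockIdx, if_neg hu.ne', if_pos hu]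

lemma two_le_blockIdx {u : ℤ} (hu : 2 ≤ u) : 2 ≤ blockIdx u := by
  have : 1 ≤ Nat.log 2 u.toNat := Nat.le_log_of_pow_le (by norm_num) (by omega)
  rw [blockIdx_of_pos (by omega)]
  omega

lemma lt_two_zpow_blockIdx {u : ℤ} (hu : 0 < u) : (u : ℝ) < 2 ^ blockIdx u := by
  have h : u.toNat < 2 ^ (Nat.log 2 u.toNat + 1) := Nat.lt_pow_succ_log_self (by norm_num) _
  rw [blockIdx_of_pos hu, ← Int.toNat_of_nonneg hu.le]
  exact_mod_cast h

lemma abs_theta_le {u : ℤ} (v : ℤ) (hi : 2 ≤ blockIdx u) :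
    |theta u v| ≤ 2 ^ (-(2 * (blockIdx u - 1))) := by
  have hmono : (2 : ℝ) ^ (-(2 * blockIdx u)) ≤ 2 ^ (-(2 * (blockIdx u - 1))) :=
    zpow_le_zpow_right₀ (by norm_num) (by omega)
  simp only [theta]
  split_ifs with _ _ _ _ h₅
  · omega
  · omega
  · rwa [abs_of_pos (zpow_pos two_pos _)]
  · omega
  · rw [abs_neg, abs_of_pos (zpow_pos two_pos _), h₅.2, add_sub_cancel_right]
  · omega
  · rw [abs_zero]
    positivity

lemma theta_sq_le {u : ℤ} (v : ℤ) (hu : 2 ≤ u) : theta u v ^ 2 ≤ 16 / (u : ℝ) ^ 4 := by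
  have hθ : |theta u v| ≤ 4 / (u : ℝ) ^ 2 :=
    calc |theta u v| ≤ 2 ^ (-(2 * (blockIdx u - 1))) := abs_theta_le v (two_le_blockIdx hu)
      _ = 4 / ((2 : ℝ) ^ blockIdx u) ^ 2 := by
        rw [← zpow_natCast, ← zpow_mul, zpow_neg, mul_sub, zpow_sub₀ two_ne_zero]
        norm_num [div_eq_mul_inv, mul_comm]
      _ ≤ 4 / (u : ℝ) ^ 2 := by gcongr; exact (lt_two_zpow_blockIdx (by omega)).le
  calc theta u v ^ 2 = |theta u v| ^ 2 := (sq_abs _).symm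
    _ ≤ (4 / (u : ℝ) ^ 2) ^ 2 := by gcongr
    _ = 16 / (u : ℝ) ^ 4 := by ring

lemma one_div_pow_four_le_sub {x : ℝ} (hx : 1 < x) :
    1 / x ^ 4 ≤ 1 / (3 * (x - 1) ^ 3) - 1 / (3 * x ^ 3) := by
  have h₀ : 0 < x - 1 := by linarith
  rw [div_sub_div _ _ (by positivity) (by positivity),
    div_le_div_iff₀ (by positivity) (by positivity)]
  nlinarith [pow_pos h₀ 3, pow_pos h₀ 4, mul_pos h₀ h₀]

lemma sum_Icc_one_div_pow_four_le_sub {m N : ℤ} (hm : 1 < m) (hN : m - 1 ≤ N) :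
    ∑ u ∈ Finset.Icc m N, 1 / (u : ℝ) ^ 4
      ≤ 1 / (3 * ((m : ℝ) - 1) ^ 3) - 1 / (3 * (N : ℝ) ^ 3) := by
  induction N, hN using Int.leInduction with
  | base => simp
  | succ N hN ih =>
    have hstep := one_div_pow_four_le_sub (x := (N : ℝ) + 1) (by
      have : (1 : ℝ) ≤ N := by exact_mod_cast (by omega : (1 : ℤ) ≤ N)
      linarith)
    rw [add_sub_cancel_right] at hstep
    rw [← Finset.insert_Icc_right_eq_Icc_add_one (by omega), Finset.sum_insert (by simp)]
    push_cast
    linarith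

lemma sum_one_div_pow_four_le {m : ℤ} (hm : 1 < m) {s : Finset ℤ} (hs : ∀ u ∈ s, m ≤ u) :
    ∑ u ∈ s, 1 / (u : ℝ) ^ 4 ≤ 1 / (3 * ((m : ℝ) - 1) ^ 3) := by
  obtain ⟨N, hN⟩ := s.bddAbove
  have hsub : s ⊆ Finset.Icc m (max N m) := fun u hu =>
    Finset.mem_Icc.2 ⟨hs u hu, le_max_of_le_left (hN hu)⟩
  have hpos : (0 : ℝ) < max N m := by exact_mod_cast (by omega : (0 : ℤ) < max N m)
  calc ∑ u ∈ s, 1 / (u : ℝ) ^ 4 ≤ ∑ u ∈ Finset.Icc m (max N m), 1 / (u : ℝ) ^ 4 :=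
        Finset.sum_le_sum_of_subset_of_nonneg hsub fun _ _ _ => by positivity
    _ ≤ 1 / (3 * ((m : ℝ) - 1) ^ 3) - 1 / (3 * ((max N m : ℤ) : ℝ) ^ 3) :=
        sum_Icc_one_div_pow_four_le_sub hm (by omega)
    _ ≤ 1 / (3 * ((m : ℝ) - 1) ^ 3) := sub_le_self _ (by positivity)

lemma tsum_ite_ofReal_theta_sq_le {m : ℤ} (hm : 2 ≤ m) (v : ℤ → ℤ) (p : ℤ → Prop)
    [DecidablePred p] (hp : ∀ u, p u → m ≤ u) :
    ∑' u, (if p u then ENNReal.ofReal (theta u (v u) ^ 2) else 0)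
      ≤ ENNReal.ofReal (16 / (3 * ((m : ℝ) - 1) ^ 3)) := by
  refine ENNReal.summable.tsum_le_of_sum_le fun s => ?_
  have hs : ∀ u ∈ s.filter p, m ≤ u := fun u hu => hp u (Finset.mem_filter.1 hu).2
  calc ∑ u ∈ s, (if p u then ENNReal.ofReal (theta u (v u) ^ 2) else 0)
      = ∑ u ∈ s.filter p, ENNReal.ofReal (theta u (v u) ^ 2) := (Finset.sum_filter _ _).symm
    _ ≤ ∑ u ∈ s.filter p, ENNReal.ofReal (16 * (1 / (u : ℝ) ^ 4)) :=
      Finset.sum_le_sum fun u hu => ENNReal.ofReal_le_ofReal <| by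
        rw [mul_one_div]; exact theta_sq_le _ (hm.trans (hs u hu))
    _ = ENNReal.ofReal (16 * ∑ u ∈ s.filter p, 1 / (u : ℝ) ^ 4) := by
      rw [Finset.mul_sum, ENNReal.ofReal_sum_of_nonneg fun _ _ => by positivity]
    _ ≤ ENNReal.ofReal (16 / (3 * ((m : ℝ) - 1) ^ 3)) := by
      rw [← mul_one_div 16]
      gcongr
      exact sum_one_div_pow_four_le (by omega) hs

lemma div_cube_le_of_le_three_mul {a b : ℝ} (hb : 0 < b) (hba : b ≤ 3 * a) :
    16 / (3 * a ^ 3) ≤ 144 / b ^ 3 :=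
  calc 16 / (3 * a ^ 3) = 144 / (3 * a) ^ 3 := by ring
    _ ≤ 144 / b ^ 3 := by gcongr

/-- for every `w ≥ 4`,
`∑_{u ≥ ⌈w/3⌉, u ≠ 1} θ(u, u+w)² ≤ 144/(w-3)³`, and for `w ∈ {2,3}`,
`∑_{u ≥ 1, u ≠ 1} θ(u, u+w)² ≤ 16/3`. -/
theorem theta_tail_square_sum_bound :
    (∀ w : ℤ, 4 ≤ w →
      ∑' u : ℤ,
          (if ⌈(w : ℚ) / 3⌉ ≤ u ∧ u ≠ 1 then
            ENNReal.ofReal (theta u (u + w) ^ 2) else 0)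
        ≤ ENNReal.ofReal (144 / ((w : ℝ) - 3) ^ 3)) ∧
    (∀ w : ℤ, w = 2 ∨ w = 3 →
      ∑' u : ℤ,
          (if 1 ≤ u ∧ u ≠ 1 then ENNReal.ofReal (theta u (u + w) ^ 2) else 0)
        ≤ ENNReal.ofReal (16 / 3)) := by
  refine ⟨fun w hw => ?_, fun w _ => ?_⟩
  · set m := ⌈(w : ℚ) / 3⌉
    have hm : 1 < m :=
      Int.lt_ceil.2 (by rw [lt_div_iff₀ three_pos]; exact_mod_cast (by omega : 3 < w))
    have hwm : (w : ℝ) ≤ 3 * m := by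
      have : (w : ℚ) ≤ 3 * m := by linarith [Int.le_ceil ((w : ℚ) / 3)]
      exact_mod_cast this
    calc _ ≤ ENNReal.ofReal (16 / (3 * ((m : ℝ) - 1) ^ 3)) :=
          tsum_ite_ofReal_theta_sq_le (by omega) (· + w) _ fun u hu => hu.1
      _ ≤ ENNReal.ofReal (144 / ((w : ℝ) - 3) ^ 3) := by
          refine ENNReal.ofReal_le_ofReal (div_cube_le_of_le_three_mul ?_ (by linarith))
          have : (4 : ℝ) ≤ w := by exact_mod_cast hw
          linarith
  · convert tsum_ite_ofReal_theta_sq_le le_rfl (· + w) (fun u => 1 ≤ u ∧ u ≠ 1)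
      (fun u hu => by omega) using 2
    norm_num
end

section
/- Let f : ℝ → (0,∞) be a symmetric function (f(−y) = f(y)) which is strictly positive and decreasing on (0,∞) and satisfies ∫_{|y|>ε} f(y) dy < ∞ for every ε > 0 (i.e., the measure ν(dy) = f(y)dy is unimodal). Define ν(a,∞) := ∫_a^∞ f(u) du. If ∫_1^∞ dy/(y³ f(y)) < ∞, then ∫_1^∞ ( ∫_0^y z · ν(max{1,z}, ∞) dz )^{−1} dy < ∞; more precisely, there is a constant D > 0 (depending on f) such that ∫_1^∞ ( ∫_0^y z · ν(max{1,z}, ∞) dz )^{−1} dy ≤ D ∫_1^∞ dy/(y³ f(y)). -/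
/-!
Write `T(z) = ν(max{1,z}, ∞)`, an antitone function of `z`, and `G(y) = ∫_0^y z T(z) dz`.
For `y ≥ 4` and `z ∈ [y/4, y/2]`, monotonicity of `f` gives `T(z) ≥ ∫_z^y f ≥ (y/2) f(y)`,
so `G(y) ≥ ∫_{y/4}^{y/2} z T(z) dz ≥ y³ f(y) / 32`. For `1 ≤ y ≤ 4` one has
`G(y) ≥ G(1) ≥ T(1)/2 > 0` while `y³ f(y) ≤ 64 f(1)`. Hence `G(y) ≥ κ y³ f(y)` on `[1, ∞)`,
and the integral of `1/G` is dominated by `κ⁻¹ ∫_1^∞ dy/(y³ f(y))`.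
-/

open MeasureTheory Set

noncomputable def truncatedTail (f : ℝ → ℝ) (a : ℝ) : ℝ := ∫ u in Ioi (max 1 a), f u

section

variable {f : ℝ → ℝ}

lemma mul_le_intervalIntegral_of_antitoneOn (hf : AntitoneOn f (Ioi 0)) {a b : ℝ}
    (ha : 0 < a) (hab : a ≤ b) : (b - a) * f b ≤ ∫ u in a..b, f u := by
  have hf_int : IntervalIntegrable f volume a b :=
    (intervalIntegrable_iff_integrableOn_Icc_of_le hab).2 <|
      (hf.mono fun u hu => ha.trans_le hu.1).integrableOn_isCompact isCompact_Icc
  calc (b - a) * f b = ∫ _ in a..b, f b := by simp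
    _ ≤ ∫ u in a..b, f u :=
      intervalIntegral.integral_mono_on hab intervalIntegrable_const hf_int fun u hu =>
        hf (ha.trans_le hu.1) (ha.trans_le hab) hu.2

lemma mul_le_truncatedTail (hf_anti : AntitoneOn f (Ioi 0)) (hf_nonneg : ∀ y, 1 < y → 0 ≤ f y)
    (hf_int : IntegrableOn f (Ioi 1)) {a b : ℝ} (ha : 1 ≤ a) (hab : a ≤ b) :
    (b - a) * f b ≤ truncatedTail f a := by
  have hf_int_a : IntegrableOn f (Ioi a) := hf_int.mono_set (Ioi_subset_Ioi ha)
  calc (b - a) * f b ≤ ∫ u in a..b, f u :=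
        mul_le_intervalIntegral_of_antitoneOn hf_anti (one_pos.trans_le ha) hab
    _ = ∫ u in Ioc a b, f u := intervalIntegral.integral_of_le hab
    _ ≤ ∫ u in Ioi a, f u :=
        setIntegral_mono_set hf_int_a
          (ae_restrict_of_forall_mem measurableSet_Ioi fun u hu =>
            hf_nonneg u (ha.trans_lt hu))
          Ioc_subset_Ioi_self.eventuallyLE
    _ = truncatedTail f a := by rw [truncatedTail, max_eq_right ha]

lemma antitone_truncatedTail (hf_nonneg : ∀ y, 1 < y → 0 ≤ f y)
    (hf_int : IntegrableOn f (Ioi 1)) : Antitone (truncatedTail f) := fun a _ hab =>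
  setIntegral_mono_set (hf_int.mono_set (Ioi_subset_Ioi (le_max_left 1 a)))
    (ae_restrict_of_forall_mem measurableSet_Ioi fun u hu =>
      hf_nonneg u ((le_max_left 1 a).trans_lt hu))
    (Ioi_subset_Ioi (max_le_max le_rfl hab)).eventuallyLE

lemma truncatedTail_one_pos (hf_anti : AntitoneOn f (Ioi 0)) (hf_pos : ∀ y, 0 < y → 0 < f y)
    (hf_int : IntegrableOn f (Ioi 1)) : 0 < truncatedTail f 1 := by
  have h := mul_le_truncatedTail hf_anti (fun y hy => (hf_pos y (one_pos.trans hy)).le) hf_int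
    le_rfl one_le_two
  linarith [hf_pos 2 two_pos]

lemma intervalIntegrable_mul_truncatedTail (hf_nonneg : ∀ y, 1 < y → 0 ≤ f y)
    (hf_int : IntegrableOn f (Ioi 1)) (a b : ℝ) :
    IntervalIntegrable (fun z => z * truncatedTail f z) volume a b :=
  (antitone_truncatedTail hf_nonneg hf_int).intervalIntegrable.continuousOn_mul
    continuousOn_id

lemma integral_mul_truncatedTail_mono (hf_nonneg : ∀ y, 1 < y → 0 ≤ f y)
    (hf_int : IntegrableOn f (Ioi 1)) {a b y : ℝ} (ha : 0 ≤ a) (hab : a ≤ b) (hby : b ≤ y) :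
    ∫ z in a..b, z * truncatedTail f z ≤ ∫ z in (0 : ℝ)..y, z * truncatedTail f z :=
  intervalIntegral.integral_mono_interval ha hab hby
    (ae_restrict_of_forall_mem measurableSet_Ioc fun z hz =>
      mul_nonneg hz.1.le (setIntegral_nonneg measurableSet_Ioi fun u hu =>
        hf_nonneg u ((le_max_left 1 z).trans_lt hu)))
    (intervalIntegrable_mul_truncatedTail hf_nonneg hf_int 0 y)

lemma truncatedTail_one_div_two_le_integral (hf_nonneg : ∀ y, 1 < y → 0 ≤ f y)
    (hf_int : IntegrableOn f (Ioi 1)) {y : ℝ} (hy : 1 ≤ y) :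
    truncatedTail f 1 / 2 ≤ ∫ z in (0 : ℝ)..y, z * truncatedTail f z :=
  calc truncatedTail f 1 / 2 = ∫ z in (0 : ℝ)..1, z * truncatedTail f 1 := by
        rw [intervalIntegral.integral_mul_const, integral_id]; ring
    _ ≤ ∫ z in (0 : ℝ)..1, z * truncatedTail f z :=
        intervalIntegral.integral_mono_on zero_le_one
          ((continuous_mul_const _).intervalIntegrable _ _)
          (intervalIntegrable_mul_truncatedTail hf_nonneg hf_int 0 1) fun z hz =>
            mul_le_mul_of_nonneg_left (antitone_truncatedTail hf_nonneg hf_int hz.2) hz.1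
    _ ≤ ∫ z in (0 : ℝ)..y, z * truncatedTail f z :=
        integral_mul_truncatedTail_mono hf_nonneg hf_int le_rfl zero_le_one hy

lemma cube_mul_div_le_integral (hf_anti : AntitoneOn f (Ioi 0))
    (hf_nonneg : ∀ y, 1 < y → 0 ≤ f y) (hf_int : IntegrableOn f (Ioi 1)) {y : ℝ} (hy : 4 ≤ y) :
    y ^ 3 * f y / 32 ≤ ∫ z in (0 : ℝ)..y, z * truncatedTail f z := by
  have hfy : 0 ≤ f y := hf_nonneg y (by linarith)
  have htail : ∀ z ∈ Icc (y / 4) (y / 2), y / 2 * f y ≤ truncatedTail f z := fun z hz =>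
    calc y / 2 * f y ≤ (y - z) * f y := by gcongr; linarith [hz.2]
      _ ≤ truncatedTail f z :=
        mul_le_truncatedTail hf_anti hf_nonneg hf_int (by linarith [hz.1]) (by linarith [hz.2])
  calc y ^ 3 * f y / 32 = ∫ _ in y / 4..y / 2, y / 4 * (y / 2 * f y) := by
        rw [intervalIntegral.integral_const, smul_eq_mul]; ring
    _ ≤ ∫ z in y / 4..y / 2, z * truncatedTail f z :=
        intervalIntegral.integral_mono_on (by linarith) intervalIntegrable_const
          (intervalIntegrable_mul_truncatedTail hf_nonneg hf_int _ _) fun z hz =>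
            mul_le_mul hz.1 (htail z hz) (by positivity) (by linarith [hz.1])
    _ ≤ ∫ z in (0 : ℝ)..y, z * truncatedTail f z :=
        integral_mul_truncatedTail_mono hf_nonneg hf_int (by linarith) (by linarith) (by linarith)

lemma exists_pos_mul_cube_le_integral (hf_anti : AntitoneOn f (Ioi 0))
    (hf_pos : ∀ y, 0 < y → 0 < f y) (hf_int : IntegrableOn f (Ioi 1)) :
    ∃ κ > 0, ∀ y, 1 ≤ y → κ * (y ^ 3 * f y) ≤ ∫ z in (0 : ℝ)..y, z * truncatedTail f z := by
  have hf_nonneg : ∀ y, 1 < y → 0 ≤ f y := fun y hy => (hf_pos y (one_pos.trans hy)).le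
  have hT := truncatedTail_one_pos hf_anti hf_pos hf_int
  have hf1 := hf_pos 1 one_pos
  refine ⟨min (1 / 32) (truncatedTail f 1 / (128 * f 1)), by positivity, fun y hy => ?_⟩
  have hX : 0 ≤ y ^ 3 * f y := by have := hf_pos y (by linarith); positivity
  rcases le_or_gt 4 y with hy4 | hy4
  · calc min (1 / 32) (truncatedTail f 1 / (128 * f 1)) * (y ^ 3 * f y)
          ≤ 1 / 32 * (y ^ 3 * f y) := by gcongr; exact min_le_left _ _
      _ ≤ _ := by linarith [cube_mul_div_le_integral hf_anti hf_nonneg hf_int hy4]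
  · have hX64 : y ^ 3 * f y ≤ 64 * f 1 := by
      have hfy : f y ≤ f 1 := hf_anti (mem_Ioi.2 one_pos) (mem_Ioi.2 (by linarith)) hy
      have hy3 : y ^ 3 ≤ 4 ^ 3 := by gcongr
      nlinarith [hf_pos y (by linarith)]
    calc min (1 / 32) (truncatedTail f 1 / (128 * f 1)) * (y ^ 3 * f y)
          ≤ truncatedTail f 1 / (128 * f 1) * (64 * f 1) := by
            gcongr
            exact min_le_right _ _
      _ = truncatedTail f 1 / 2 := by field_simp; ring
      _ ≤ _ := truncatedTail_one_div_two_le_integral hf_nonneg hf_int hy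

end

theorem unimodal_transience_condition_comparison_general
    (f : ℝ → ℝ)
    (hf_pos : ∀ y : ℝ, 0 < y → 0 < f y)
    (hf_anti : AntitoneOn f (Set.Ioi (0 : ℝ)))
    (hf_int : ∀ ε : ℝ, 0 < ε → IntegrableOn f {y : ℝ | ε < |y|})
    (hI : IntegrableOn (fun y => 1 / (y ^ 3 * f y)) (Set.Ici (1 : ℝ))) :
    IntegrableOn
        (fun y => (∫ z in (0 : ℝ)..y, z * ∫ u in Set.Ioi (max 1 z), f u)⁻¹)
        (Set.Ici (1 : ℝ)) ∧
    ∃ D : ℝ, 0 < D ∧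
      ∫ y in Set.Ici (1 : ℝ),
          (∫ z in (0 : ℝ)..y, z * ∫ u in Set.Ioi (max 1 z), f u)⁻¹
        ≤ D * ∫ y in Set.Ici (1 : ℝ), 1 / (y ^ 3 * f y) := by
  change IntegrableOn (fun y => (∫ z in (0 : ℝ)..y, z * truncatedTail f z)⁻¹) (Ici 1) ∧
    ∃ D : ℝ, 0 < D ∧ ∫ y in Ici (1 : ℝ), (∫ z in (0 : ℝ)..y, z * truncatedTail f z)⁻¹
      ≤ D * ∫ y in Ici (1 : ℝ), 1 / (y ^ 3 * f y)
  have hf_int₁ : IntegrableOn f (Ioi 1) := (hf_int 1 one_pos).mono_set fun y (hy : 1 < y) =>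
    show 1 < |y| by rwa [abs_of_pos (one_pos.trans hy)]
  obtain ⟨κ, hκ, hG⟩ := exists_pos_mul_cube_le_integral hf_anti hf_pos hf_int₁
  have hX : ∀ y ∈ Ici (1 : ℝ), 0 < κ * (y ^ 3 * f y) := fun y hy =>
    have hy₀ : 0 < y := one_pos.trans_le hy
    mul_pos hκ (mul_pos (pow_pos hy₀ 3) (hf_pos y hy₀))
  have hbound : ∀ y ∈ Ici (1 : ℝ),
      (∫ z in (0 : ℝ)..y, z * truncatedTail f z)⁻¹ ≤ κ⁻¹ * (1 / (y ^ 3 * f y)) := fun y hy =>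
    calc _ ≤ (κ * (y ^ 3 * f y))⁻¹ := inv_anti₀ (hX y hy) (hG y hy)
      _ = κ⁻¹ * (1 / (y ^ 3 * f y)) := by rw [mul_inv, one_div]
  have hmeas : Measurable fun y => (∫ z in (0 : ℝ)..y, z * truncatedTail f z)⁻¹ :=
    (intervalIntegral.continuous_primitive (intervalIntegrable_mul_truncatedTail
      (fun y hy => (hf_pos y (one_pos.trans hy)).le) hf_int₁) 0).measurable.inv
  have hint : IntegrableOn (fun y => (∫ z in (0 : ℝ)..y, z * truncatedTail f z)⁻¹) (Ici 1) :=
    (hI.const_mul κ⁻¹).mono' hmeas.aestronglyMeasurable <|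
      ae_restrict_of_forall_mem measurableSet_Ici fun y hy => by
        rw [Real.norm_of_nonneg (inv_nonneg.2 ((hX y hy).trans_le (hG y hy)).le)]
        exact hbound y hy
  refine ⟨hint, κ⁻¹, inv_pos.2 hκ, ?_⟩
  rw [← integral_const_mul]
  exact setIntegral_mono_on hint (hI.const_mul κ⁻¹) measurableSet_Ici hbound

/-- if `ν(dy) = f(y)dy` is unimodal (symmetric density, strictly
positive and decreasing on `(0,∞)`, integrable away from the origin) and
`∫_1^∞ dy/(y³ f(y)) < ∞`, then the recurrence-condition integral
`∫_1^∞ (∫_0^y z ν(max{1,z},∞) dz)⁻¹ dy` is finite; more precisely it is bounded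
by `D ∫_1^∞ dy/(y³ f(y))` for some constant `D > 0`. -/
theorem unimodal_transience_condition_comparison
    (f : ℝ → ℝ) (hf_meas : Measurable f)
    (hf_symm : ∀ y : ℝ, f (-y) = f y)
    (hf_pos : ∀ y : ℝ, 0 < y → 0 < f y)
    (hf_anti : AntitoneOn f (Set.Ioi (0 : ℝ)))
    (hf_int : ∀ ε : ℝ, 0 < ε → IntegrableOn f {y : ℝ | ε < |y|})
    (hI : IntegrableOn (fun y => 1 / (y ^ 3 * f y)) (Set.Ici (1 : ℝ))) :
    IntegrableOn
        (fun y => (∫ z in (0 : ℝ)..y, z * ∫ u in Set.Ioi (max 1 z), f u)⁻¹)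
        (Set.Ici (1 : ℝ)) ∧
    ∃ D : ℝ, 0 < D ∧
      ∫ y in Set.Ici (1 : ℝ),
          (∫ z in (0 : ℝ)..y, z * ∫ u in Set.Ioi (max 1 z), f u)⁻¹
        ≤ D * ∫ y in Set.Ici (1 : ℝ), 1 / (y ^ 3 * f y) :=
  unimodal_transience_condition_comparison_general f hf_pos hf_anti hf_int hI
end

section
/- Let (S_n) be a random walk on ℤ with S_0 = 0 and jumps (J_k) satisfying P(J_1 ∈ 2ℤ) < 1. Define stopping times T_0 := 0 and T_n := inf{k > T_{n−1} : S_k ∈ 2ℤ} for n ≥ 1. Then P(T_n < ∞) = 1 for every n ≥ 1. -/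
/-!
A jump changes the parity of the walk exactly when it is odd. The jumps are i.i.d. and odd with
positive probability, so by the second Borel–Cantelli lemma almost surely infinitely many of them
are odd. Then the walk cannot stay odd from some time on: it is even at arbitrarily late times,
so each `T (n + 1)`, the first even time after the finite time `T n`, is finite.
-/

open MeasureTheory Filter ProbabilityTheory

theorem frequently_two_dvd_sum_range_of_frequently_not_two_dvd {f : ℕ → ℤ}
    (hf : ∃ᶠ k in atTop, ¬ (2 : ℤ) ∣ f k) :
    ∃ᶠ m in atTop, (2 : ℤ) ∣ ∑ i ∈ Finset.range m, f i := by
  refine fun hodd => hf ?_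
  filter_upwards [hodd, (tendsto_add_atTop_nat 1).eventually hodd] with k hk hk1
  rw [Finset.sum_range_succ] at hk1
  omega

theorem ProbabilityTheory.iIndepFun.ae_frequently_mem {Ω β : Type*} {_ : MeasurableSpace Ω}
    [MeasurableSpace β] {P : Measure Ω} {X : ℕ → Ω → β} (hindep : iIndepFun X P)
    (hmeas : ∀ k, Measurable (X k)) (hident : ∀ k, P.map (X k) = P.map (X 0))
    {A : Set β} (hA : MeasurableSet A) (hpos : P (X 0 ⁻¹' A) ≠ 0) :
    ∀ᵐ ω ∂P, ∃ᶠ k in atTop, X k ω ∈ A := by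
  have hsets : iIndepSet (fun k => X k ⁻¹' A) P :=
    iIndep_comap_mem_iff.1 (hindep.comp _ fun _ => measurable_mem.2 hA)
  have hprob (k : ℕ) : P (X k ⁻¹' A) = P (X 0 ⁻¹' A) := by
    rw [← Measure.map_apply (hmeas k) hA, hident, Measure.map_apply (hmeas 0) hA]
  have hsum : ∑' k, P (X k ⁻¹' A) = ⊤ := by
    simp_rw [hprob]
    exact ENNReal.tsum_const_eq_top_of_ne_zero hpos
  have := hsets.isProbabilityMeasure
  have hlimsup_meas := MeasurableSet.measurableSet_limsup fun k => hmeas k hA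
  have hlimsup := (mem_ae_iff_prob_eq_one hlimsup_meas).2 <|
    measure_limsup_eq_one (fun k => hmeas k hA) hsets hsum
  exact mem_of_superset hlimsup fun ω hω => mem_limsup_iff_frequently_mem.1 hω

theorem sInf_natCast_gt_lt_top_of_frequently {p : ℕ → Prop} (hp : ∃ᶠ m in atTop, p m)
    {t : ℕ∞} (ht : t < ⊤) :
    sInf {k : ℕ∞ | ∃ m : ℕ, k = m ∧ t < m ∧ p m} < ⊤ := by
  lift t to ℕ using ht.ne
  obtain ⟨m, hm, htm⟩ := (hp.and_eventually (eventually_gt_atTop t)).exists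
  have hmem : (m : ℕ∞) ∈ {k : ℕ∞ | ∃ m : ℕ, k = m ∧ (t : ℕ∞) < m ∧ p m} :=
    ⟨m, rfl, by exact_mod_cast htm, hm⟩
  exact (sInf_le hmem).trans_lt (ENat.natCast_lt_top m)

theorem lt_top_of_sInf_natCast_gt_of_frequently {p : ℕ → Prop} (hp : ∃ᶠ m in atTop, p m)
    {T : ℕ → ℕ∞} (hT0 : T 0 = 0)
    (hTsucc : ∀ n, T (n + 1) = sInf {k : ℕ∞ | ∃ m : ℕ, k = m ∧ T n < m ∧ p m})
    (n : ℕ) : T n < ⊤ := by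
  induction n with
  | zero => simp [hT0]
  | succ n ih => exact hTsucc n ▸ sInf_natCast_gt_lt_top_of_frequently hp ih

/-- for a random walk on ℤ whose jump is even with probability `< 1`,
the successive hitting times `T_n` of the even integers `2ℤ`
(`T_0 = 0`, `T_n = inf{k > T_{n-1} : S_k ∈ 2ℤ}`, `inf ∅ = ∞`) are a.s. finite. -/
theorem hitting_times_of_even_integers_finite
    {Ω : Type*} [MeasurableSpace Ω] (P : Measure Ω) [IsProbabilityMeasure P]
    (J : ℕ → Ω → ℤ) (hmeas : ∀ k, Measurable (J k))
    (hindep : iIndepFun J P)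
    (hident : ∀ k, Measure.map (J k) P = Measure.map (J 0) P)
    (heven : P {ω | (2 : ℤ) ∣ J 0 ω} < 1)
    (T : ℕ → Ω → ℕ∞)
    (hT0 : ∀ ω, T 0 ω = 0)
    (hTsucc : ∀ n ω, T (n + 1) ω =
      sInf {k : ℕ∞ | ∃ m : ℕ, k = (m : ℕ∞) ∧ T n ω < (m : ℕ∞) ∧
        (2 : ℤ) ∣ ∑ i ∈ Finset.range m, J i ω}) :
    ∀ n : ℕ, 1 ≤ n → P {ω | T n ω < ⊤} = 1 := by
  have hodd_pos : P (J 0 ⁻¹' {x | ¬ (2 : ℤ) ∣ x}) ≠ 0 := by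
    change P (J 0 ⁻¹' {x | (2 : ℤ) ∣ x})ᶜ ≠ 0
    rw [prob_compl_eq_one_sub (hmeas 0 MeasurableSet.of_discrete)]
    exact (tsub_pos_of_lt heven).ne'
  have hodd : ∀ᵐ ω ∂P, ∃ᶠ k in atTop, ¬ (2 : ℤ) ∣ J k ω :=
    hindep.ae_frequently_mem hmeas hident MeasurableSet.of_discrete hodd_pos
  intro n _
  have hfinite : ∀ᵐ ω ∂P, T n ω < ⊤ := hodd.mono fun ω hω =>
    lt_top_of_sInf_natCast_gt_of_frequently (T := fun n => T n ω)
      (frequently_two_dvd_sum_range_of_frequently_not_two_dvd hω) (hT0 ω)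
      (fun n => hTsucc n ω) n
  exact (measure_congr (ae_eq_univ.2 hfinite)).trans measure_univ
end

section
/- Let (S_n) be a symmetric random walk on ℤ with S_0 = 0 and jumps (J_k) satisfying P(J_1 ∈ 2ℤ) < 1, let T_0 := 0, T_n := inf{k > T_{n−1} : S_k ∈ 2ℤ} (all almost surely finite), and set X_n := S_{T_n}. Then (X_n) is a symmetric random walk on 2ℤ: the increments X_1, X_2 − X_1, X_3 − X_2, … are i.i.d. random variables taking values in 2ℤ, and the distribution of X_1 is symmetric. -/
/-!
The even times `T n` are stopping times for the jumps, and the walk renews at each of them. The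
event that `T n = s` and the first `n` increments of `X` lie in given sets depends only on
`J 0, …, J (s - 1)`. On it, `T (n + 1) = s + d` and `X (n + 1) - X n ∈ A` say that the partial sums
of `J s, J (s + 1), …` first become even at time `d`, with a value in `A`; this depends only on
`J s, …, J (s + d - 1)`, so it is independent of the former event and, by stationarity, has the
same probability as for `J 0, J 1, …`. Summing over `s` and `d` gives
`P (T n < ⊤, X (k + 1) - X k ∈ A k for all k < n) = ∏ k < n, q (A k)`, where `q` is the law of the
value of the first excursion. Since `T n < ⊤` almost surely, this product formula says that the
increments are i.i.d. with law `q`. Negating the jumps preserves their joint law and the parity of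
every partial sum, so `q` is symmetric.
-/

open MeasureTheory Filter ProbabilityTheory

open Finset

open scoped ENNReal

theorem ENNReal.tsum_sum_antidiagonal_eq_tsum_mul_tsum (f g : ℕ → ℝ≥0∞) :
    ∑' n, ∑ p ∈ antidiagonal n, f p.1 * g p.2 = (∑' n, f n) * ∑' n, g n := by
  calc ∑' n, ∑ p ∈ antidiagonal n, f p.1 * g p.2
      = ∑' x : Σ n, antidiagonal n, f x.2.1.1 * g x.2.1.2 := by
        rw [ENNReal.tsum_sigma']
        exact tsum_congr fun n => (Finset.tsum_subtype _ fun p : ℕ × ℕ => f p.1 * g p.2).symm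
    _ = ∑' p : ℕ × ℕ, f p.1 * g p.2 :=
        HasAntidiagonal.sigmaAntidiagonalEquivProd.tsum_eq fun p => f p.1 * g p.2
    _ = (∑' n, f n) * ∑' n, g n := by
        rw [ENNReal.tsum_prod (f := fun a b => f a * g b), ← ENNReal.tsum_mul_right]
        simp_rw [ENNReal.tsum_mul_left]

section ProductFormula

variable {Ω β : Type*} [MeasurableSpace Ω] {P : Measure Ω}
  [IsProbabilityMeasure P] {Z : ℕ → Ω → β} {q : Set β → ℝ≥0∞}

theorem measure_biInter_preimage_eq_prod
    (h : ∀ n (A : ℕ → Set β), P (⋂ k ∈ range n, Z k ⁻¹' A k) = ∏ k ∈ range n, q (A k))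
    (S : Finset ℕ) (B : ℕ → Set β) :
    P (⋂ i ∈ S, Z i ⁻¹' B i) = ∏ i ∈ S, q (B i) := by
  classical
  have hq : q Set.univ = 1 := by simpa using (h 1 fun _ => Set.univ).symm
  obtain ⟨n, hn⟩ := S.exists_nat_subset_range
  have hset : ⋂ i ∈ S, Z i ⁻¹' B i =
      ⋂ k ∈ range n, Z k ⁻¹' S.piecewise B (fun _ => Set.univ) k := by
    ext ω
    simp only [Set.mem_iInter, Set.mem_preimage]
    refine ⟨fun hB k _ => ?_, fun hB i hi => ?_⟩
    · by_cases hk : k ∈ S <;> simp [hk, hB]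
    · simpa [hi] using hB i (hn hi)
  rw [hset, h, ← prod_subset hn fun k _ hk => by simp [hk, hq]]
  exact prod_congr rfl fun i hi => by simp [hi]

theorem measure_preimage_eq_of_prod
    (h : ∀ n (A : ℕ → Set β), P (⋂ k ∈ range n, Z k ⁻¹' A k) = ∏ k ∈ range n, q (A k))
    (n : ℕ) (B : Set β) : P (Z n ⁻¹' B) = q B := by
  simpa using measure_biInter_preimage_eq_prod h {n} fun _ => B

theorem iIndepFun_of_prod [MeasurableSpace β]
    (h : ∀ n (A : ℕ → Set β), P (⋂ k ∈ range n, Z k ⁻¹' A k) = ∏ k ∈ range n, q (A k)) :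
    iIndepFun Z P :=
  iIndepFun_iff_measure_inter_preimage_eq_mul.2 fun S B _ => by
    rw [measure_biInter_preimage_eq_prod h]
    exact prod_congr rfl fun i _ => (measure_preimage_eq_of_prod h i (B i)).symm

end ProductFormula

noncomputable def nextEvenTime (x : ℕ → ℤ) (s : ℕ∞) : ℕ∞ :=
  sInf {k : ℕ∞ | ∃ m : ℕ, k = (m : ℕ∞) ∧ s < (m : ℕ∞) ∧ (2 : ℤ) ∣ ∑ i ∈ Finset.range m, x i}

theorem nextEvenTime_eq_natCast_iff {x : ℕ → ℤ} {s : ℕ∞} {m : ℕ} :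
    nextEvenTime x s = m ↔
      s < m ∧ 2 ∣ ∑ i ∈ range m, x i ∧ ∀ l : ℕ, s < l → l < m → ¬ 2 ∣ ∑ i ∈ range l, x i := by
  set S := {k : ℕ∞ | ∃ m : ℕ, k = (m : ℕ∞) ∧ s < (m : ℕ∞) ∧ (2 : ℤ) ∣ ∑ i ∈ range m, x i}
  change sInf S = m ↔ _
  constructor
  · intro h
    have hne : S.Nonempty := by
      by_contra hS
      rw [Set.not_nonempty_iff_eq_empty.1 hS, sInf_empty] at h
      exact ENat.top_ne_natCast m h
    obtain ⟨m', hm', hsm, hev⟩ : (m : ℕ∞) ∈ S := h ▸ csInf_mem hne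
    obtain rfl : m' = m := by exact_mod_cast hm'.symm
    refine ⟨hsm, hev, fun l hsl hlm hl => ?_⟩
    have : (m' : ℕ∞) ≤ l := h ▸ sInf_le ⟨l, rfl, hsl, hl⟩
    exact absurd this (by exact_mod_cast hlm.not_ge)
  · rintro ⟨hsm, hev, hodd⟩
    refine le_antisymm (sInf_le ⟨m, rfl, hsm, hev⟩) (le_sInf ?_)
    rintro _ ⟨l, rfl, hsl, hl⟩
    exact_mod_cast not_lt.1 fun hlm => hodd l hsl (by exact_mod_cast hlm) hl

theorem nextEvenTime_add_eq_iff {x : ℕ → ℤ} {s : ℕ} (hs : 2 ∣ ∑ i ∈ range s, x i) (d : ℕ) :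
    nextEvenTime x s = ↑(s + d) ↔ nextEvenTime (fun l => x (s + l)) 0 = d := by
  have hshift : ∀ j, 2 ∣ ∑ i ∈ range (s + j), x i ↔ 2 ∣ ∑ l ∈ range j, x (s + l) := fun j => by
    rw [sum_range_add, Int.dvd_add_right hs]
  simp only [nextEvenTime_eq_natCast_iff, Nat.cast_lt, hshift, pos_iff_ne_zero, ne_eq,
    Nat.cast_eq_zero, lt_add_iff_pos_right]
  refine and_congr_right fun _ => and_congr_right fun _ =>
    ⟨fun h l hl hld => ?_, fun h l hsl hld => ?_⟩
  · rw [← hshift]; exact h (s + l) (by omega) (by omega)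
  · obtain ⟨j, rfl⟩ : ∃ j, l = s + j := ⟨l - s, by omega⟩
    rw [hshift]; exact h j (by omega) (by omega)

theorem nextEvenTime_neg (x : ℕ → ℤ) (s : ℕ∞) :
    nextEvenTime (fun i => -x i) s = nextEvenTime x s := by
  simp only [nextEvenTime, sum_neg_distrib, dvd_neg]

noncomputable def evenTime (x : ℕ → ℤ) : ℕ → ℕ∞
  | 0 => 0
  | n + 1 => nextEvenTime x (evenTime x n)

noncomputable def evenValue (x : ℕ → ℤ) (n : ℕ) : ℤ :=
  ∑ i ∈ range (evenTime x n).toNat, x i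

@[simp]
theorem evenValue_zero (x : ℕ → ℤ) : evenValue x 0 = 0 := by
  simp [evenValue, evenTime]

theorem eq_evenTime {x : ℕ → ℤ} {t : ℕ → ℕ∞} (h0 : t 0 = 0)
    (hsucc : ∀ n, t (n + 1) = nextEvenTime x (t n)) : t = evenTime x := by
  funext n
  induction n with
  | zero => exact h0
  | succ n ih => rw [hsucc, ih]; rfl

theorem two_dvd_sum_range_of_evenTime_eq {x : ℕ → ℤ} {n m : ℕ} (h : evenTime x n = m) :
    2 ∣ ∑ i ∈ range m, x i := by
  cases n with
  | zero =>
    obtain rfl : m = 0 := by simpa [evenTime, eq_comm] using h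
    simp
  | succ n => exact (nextEvenTime_eq_natCast_iff.1 h).2.1

theorem two_dvd_evenValue {x : ℕ → ℤ} {n : ℕ} (h : evenTime x n ≠ ⊤) :
    2 ∣ evenValue x n := by
  obtain ⟨m, hm⟩ := ENat.ne_top_iff_exists.1 h
  rw [evenValue, ← hm, ENat.toNat_natCast]
  exact two_dvd_sum_range_of_evenTime_eq hm.symm

theorem evenTime_lt_of_evenTime_succ_eq {x : ℕ → ℤ} {n m : ℕ} (h : evenTime x (n + 1) = m) :
    evenTime x n < m :=
  (nextEvenTime_eq_natCast_iff.1 h).1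

theorem evenTime_ne_top_of_succ {x : ℕ → ℤ} {n : ℕ} (h : evenTime x (n + 1) ≠ ⊤) :
    evenTime x n ≠ ⊤ := by
  obtain ⟨m, hm⟩ := ENat.ne_top_iff_exists.1 h
  exact (evenTime_lt_of_evenTime_succ_eq hm.symm).ne_top

theorem evenTime_succ_eq_add_iff {x : ℕ → ℤ} {n s : ℕ} (h : evenTime x n = s) (d : ℕ) :
    evenTime x (n + 1) = ↑(s + d) ↔ nextEvenTime (fun l => x (s + l)) 0 = d := by
  rw [evenTime, h]
  exact nextEvenTime_add_eq_iff (two_dvd_sum_range_of_evenTime_eq h) d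

theorem evenValue_succ_sub_of_eq {x : ℕ → ℤ} {n s d : ℕ} (hs : evenTime x n = s)
    (hd : evenTime x (n + 1) = ↑(s + d)) :
    evenValue x (n + 1) - evenValue x n = ∑ l ∈ range d, x (s + l) := by
  simp only [evenValue, hs, hd, ENat.toNat_natCast, sum_range_add, add_sub_cancel_left]

def excursion (A : Set ℤ) (d : ℕ) : Set (ℕ → ℤ) :=
  {y | nextEvenTime y 0 = d ∧ ∑ i ∈ range d, y i ∈ A}

theorem excursion_neg (A : Set ℤ) (d : ℕ) :
    excursion (Neg.neg ⁻¹' A) d = (fun y i => -y i) ⁻¹' excursion A d := by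
  ext y
  simp [excursion, nextEvenTime_neg, sum_neg_distrib]

def evenPath (n m : ℕ) (A : ℕ → Set ℤ) : Set (ℕ → ℤ) :=
  {x | evenTime x n = m ∧ ∀ k < n, evenValue x (k + 1) - evenValue x k ∈ A k}

theorem evenPath_zero (m : ℕ) (A : ℕ → Set ℤ) : evenPath 0 m A = {_x | m = 0} := by
  ext x
  simp [evenPath, evenTime, eq_comm]

theorem disjoint_evenPath {n m m' : ℕ} (h : m ≠ m') (A B : ℕ → Set ℤ) :
    Disjoint (evenPath n m A) (evenPath n m' B) :=
  Set.disjoint_left.2 fun _ hx hx' => h (by exact_mod_cast hx.1.symm.trans hx'.1)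

theorem evenPath_succ (n m : ℕ) (A : ℕ → Set ℤ) :
    evenPath (n + 1) m A = ⋃ p ∈ antidiagonal m,
      evenPath n p.1 A ∩ (fun x l => x (p.1 + l)) ⁻¹' excursion (A n) p.2 := by
  ext x
  simp only [evenPath, excursion, Set.mem_iUnion, Set.mem_inter_iff, Set.mem_preimage,
    Set.mem_ofPred_eq, HasAntidiagonal.mem_antidiagonal, exists_prop, Prod.exists]
  constructor
  · rintro ⟨hm, hA⟩
    have hlt := evenTime_lt_of_evenTime_succ_eq hm
    obtain ⟨s, hs⟩ := ENat.ne_top_iff_exists.1 hlt.ne_top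
    obtain ⟨d, rfl⟩ : ∃ d, m = s + d := ⟨m - s, by rw [← hs] at hlt; norm_cast at hlt; omega⟩
    refine ⟨s, d, rfl, ⟨hs.symm, fun k hk => hA k (by omega)⟩,
      (evenTime_succ_eq_add_iff hs.symm d).1 hm, ?_⟩
    rw [← evenValue_succ_sub_of_eq hs.symm hm]
    exact hA n n.lt_succ_self
  · rintro ⟨s, d, rfl, ⟨hs, hA⟩, hd, hsum⟩
    have hm := (evenTime_succ_eq_add_iff hs d).2 hd
    refine ⟨hm, fun k hk => ?_⟩
    rcases Nat.lt_succ_iff_lt_or_eq.1 hk with hk | rfl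
    · exact hA k hk
    · rwa [evenValue_succ_sub_of_eq hs hm]

theorem iUnion_evenPath (n : ℕ) (A : ℕ → Set ℤ) :
    ⋃ m, evenPath n m A =
      {x | ∀ k < n, evenValue x (k + 1) - evenValue x k ∈ A k} ∩ {x | evenTime x n < ⊤} := by
  ext x
  simp only [evenPath, Set.mem_iUnion, Set.mem_inter_iff, Set.mem_ofPred_eq, lt_top_iff_ne_top,
    ENat.ne_top_iff_exists, exists_and_right, and_comm, eq_comm]

theorem measurableSet_preimage_excursion {Ω : Type*} {m : MeasurableSpace Ω} {Y : ℕ → Ω → ℤ}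
    {d : ℕ} (hY : ∀ l < d, Measurable (Y l)) (A : Set ℤ) :
    MeasurableSet ((fun ω l => Y l ω) ⁻¹' excursion A d) := by
  have hsum : ∀ j ≤ d, Measurable fun ω => ∑ l ∈ range j, Y l ω := fun j hj =>
    Finset.measurable_sum _ fun l hl => hY l (by rw [mem_range] at hl; omega)
  have hdvd : ∀ j ≤ d, Measurable fun ω => 2 ∣ ∑ l ∈ range j, Y l ω := fun j hj =>
    (Set.to_countable {z : ℤ | 2 ∣ z}).measurableSet.mem.comp (hsum j hj)
  simp only [excursion, Set.preimage_ofPred_eq, nextEvenTime_eq_natCast_iff]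
  refine measurableSet_setOfPred.2 ((measurable_const.and ((hdvd d le_rfl).and
    (Measurable.forall fun l => measurable_const.imp ?_))).and
      ((Set.to_countable A).measurableSet.mem.comp (hsum d le_rfl)))
  by_cases hl : l < d
  · exact measurable_const.imp (hdvd l hl.le).not
  · simp only [hl, IsEmpty.forall_iff]
    exact measurable_const

theorem measurableSet_excursion (A : Set ℤ) (d : ℕ) : MeasurableSet (excursion A d) :=
  measurableSet_preimage_excursion (Y := fun l (y : ℕ → ℤ) => y l)
    (fun l _ => measurable_pi_apply l) A

noncomputable def excursionProb (μ : Measure ℤ) (A : Set ℤ) : ℝ≥0∞ :=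
  ∑' d, Measure.infinitePi (fun _ => μ) (excursion A d)

theorem excursionProb_neg {μ : Measure ℤ} [IsProbabilityMeasure μ] (hμ : μ.map Neg.neg = μ)
    (A : Set ℤ) : excursionProb μ (Neg.neg ⁻¹' A) = excursionProb μ A := by
  refine tsum_congr fun d => ?_
  rw [excursion_neg, ← Measure.map_apply (by fun_prop) (measurableSet_excursion A d),
    Measure.infinitePi_map_pi (fun _ => μ) (fun _ => measurable_neg), hμ]

section Probability

variable {Ω : Type*}

abbrev jumpSigma (J : ℕ → Ω → ℤ) (s : Set ℕ) : MeasurableSpace Ω :=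
  ⨆ i ∈ s, MeasurableSpace.comap (J i) inferInstance

theorem measurable_jumpSigma {J : ℕ → Ω → ℤ} {s : Set ℕ} {i : ℕ} (hi : i ∈ s) :
    Measurable[jumpSigma J s] (J i) :=
  (comap_measurable (J i)).mono
    (le_iSup₂ (f := fun i (_ : i ∈ s) => MeasurableSpace.comap (J i) inferInstance) i hi) le_rfl

theorem jumpSigma_mono (J : ℕ → Ω → ℤ) {s t : Set ℕ} (h : s ⊆ t) :
    jumpSigma J s ≤ jumpSigma J t :=
  biSup_mono h

theorem measurableSet_evenPath (J : ℕ → Ω → ℤ) (n m : ℕ) (A : ℕ → Set ℤ) :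
    MeasurableSet[jumpSigma J (Set.Iio m)] ((fun ω i => J i ω) ⁻¹' evenPath n m A) := by
  induction n generalizing m with
  | zero =>
    rw [evenPath_zero]
    exact MeasurableSet.const _
  | succ n ih =>
    rw [evenPath_succ, Set.preimage_iUnion₂]
    refine Finset.measurableSet_biUnion _ fun p hp => ?_
    rw [HasAntidiagonal.mem_antidiagonal] at hp
    refine .inter (jumpSigma_mono J (Set.Iio_subset_Iio (by omega)) _ (ih p.1))
      (jumpSigma_mono J (s := Set.Ico p.1 m) (fun i hi => hi.2) _ ?_)
    exact measurableSet_preimage_excursion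
      (fun l hl => measurable_jumpSigma (by simp only [Set.mem_Ico]; omega)) _

variable [MeasurableSpace Ω] {P : Measure Ω} {J : ℕ → Ω → ℤ} {μ : Measure ℤ}

theorem jumpSigma_le (hmeas : ∀ i, Measurable (J i)) (s : Set ℕ) :
    jumpSigma J s ≤ ‹MeasurableSpace Ω› :=
  iSup₂_le fun i _ => (hmeas i).comap_le

theorem indep_jumpSigma_Iio_Ici (hmeas : ∀ i, Measurable (J i)) (hindep : iIndepFun J P)
    (s : ℕ) : Indep (jumpSigma J (Set.Iio s)) (jumpSigma J (Set.Ici s)) P :=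
  indep_iSup_of_disjoint (fun i => (hmeas i).comap_le) ((iIndepFun_iff_iIndep _ _ _).1 hindep)
    (Set.disjoint_left.2 fun i (hi : i < s) (hi' : s ≤ i) => by omega)

theorem map_shift_eq_infinitePi (hmeas : ∀ i, Measurable (J i))
    (hindep : iIndepFun J P) (hlaw : ∀ i, P.map (J i) = μ) (s : ℕ) :
    P.map (fun ω l => J (s + l) ω) = Measure.infinitePi fun _ => μ := by
  rw [(hindep.precomp (add_right_injective s)).map_fun_eq_infinitePi_map₀
    (measurable_pi_lambda _ fun l => hmeas _).aemeasurable]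
  simp only [hlaw]

theorem measure_evenPath_succ (hmeas : ∀ i, Measurable (J i)) (hindep : iIndepFun J P)
    (hlaw : ∀ i, P.map (J i) = μ) (n m : ℕ) (A : ℕ → Set ℤ) :
    P ((fun ω i => J i ω) ⁻¹' evenPath (n + 1) m A) = ∑ p ∈ antidiagonal m,
      P ((fun ω i => J i ω) ⁻¹' evenPath n p.1 A) *
        Measure.infinitePi (fun _ => μ) (excursion (A n) p.2) := by
  have hpath (s : ℕ) := measurableSet_evenPath J n s A
  have hexc (s d : ℕ) : MeasurableSet[jumpSigma J (Set.Ici s)]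
      ((fun ω l => J (s + l) ω) ⁻¹' excursion (A n) d) :=
    measurableSet_preimage_excursion (fun l _ => measurable_jumpSigma (by simp)) _
  rw [evenPath_succ, Set.preimage_iUnion₂, measure_biUnion_finset]
  · refine sum_congr rfl fun p _ => ?_
    change P ((fun ω i => J i ω) ⁻¹' evenPath n p.1 A ∩
      (fun ω l => J (p.1 + l) ω) ⁻¹' excursion (A n) p.2) = _
    rw [(Indep_iff _ _ _).1 (indep_jumpSigma_Iio_Ici hmeas hindep p.1) _ _ (hpath p.1)
      (hexc p.1 p.2), ← map_shift_eq_infinitePi hmeas hindep hlaw p.1,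
      Measure.map_apply (measurable_pi_lambda _ fun l => hmeas _) (measurableSet_excursion _ _)]
  · intro p hp q hq hpq
    rw [mem_coe, HasAntidiagonal.mem_antidiagonal] at hp hq
    have h1 : p.1 ≠ q.1 := fun h1 => hpq (Prod.ext h1 (by omega))
    exact ((disjoint_evenPath h1 A A).mono Set.inter_subset_left Set.inter_subset_left).preimage _
  · exact fun p _ => .inter (jumpSigma_le hmeas _ _ (hpath p.1))
      (jumpSigma_le hmeas _ _ (hexc p.1 p.2))

theorem tsum_measure_evenPath [IsProbabilityMeasure P]
    (hmeas : ∀ i, Measurable (J i)) (hindep : iIndepFun J P)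
    (hlaw : ∀ i, P.map (J i) = μ) (n : ℕ) (A : ℕ → Set ℤ) :
    ∑' m, P ((fun ω i => J i ω) ⁻¹' evenPath n m A) = ∏ k ∈ range n, excursionProb μ (A k) := by
  induction n with
  | zero =>
    rw [tsum_eq_single 0 fun m hm => by simp [evenPath_zero, hm]]
    simp [evenPath_zero]
  | succ n ih =>
    simp only [measure_evenPath_succ hmeas hindep hlaw]
    rw [ENNReal.tsum_sum_antidiagonal_eq_tsum_mul_tsum
      (fun s => P ((fun ω i => J i ω) ⁻¹' evenPath n s A))
      (fun d => Measure.infinitePi (fun _ => μ) (excursion (A n) d)), ih, prod_range_succ,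
      excursionProb]

theorem measure_biInter_increment_evenValue [IsProbabilityMeasure P]
    (hmeas : ∀ i, Measurable (J i)) (hindep : iIndepFun J P) (hlaw : ∀ i, P.map (J i) = μ)
    {n : ℕ} (hfin : ∀ᵐ ω ∂P, evenTime (fun i => J i ω) n < ⊤) (A : ℕ → Set ℤ) :
    P (⋂ k ∈ range n, (fun ω => evenValue (fun i => J i ω) (k + 1) -
      evenValue (fun i => J i ω) k) ⁻¹' A k) = ∏ k ∈ range n, excursionProb μ (A k) := by
  rw [← measure_inter_conull (t := {ω | evenTime (fun i => J i ω) n < ⊤}) (ae_iff.1 hfin)]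
  have hset : (⋂ k ∈ range n, (fun ω => evenValue (fun i => J i ω) (k + 1) -
      evenValue (fun i => J i ω) k) ⁻¹' A k) ∩ {ω | evenTime (fun i => J i ω) n < ⊤} =
      (fun ω i => J i ω) ⁻¹' ⋃ m, evenPath n m A := by
    rw [iUnion_evenPath]
    ext ω
    simp
  rw [hset, Set.preimage_iUnion, measure_iUnion, tsum_measure_evenPath hmeas hindep hlaw]
  · exact fun m m' h => (disjoint_evenPath h A A).preimage _
  · exact fun m => jumpSigma_le hmeas _ _ (measurableSet_evenPath J n m A)

theorem measurable_evenTime (hmeas : ∀ i, Measurable (J i)) (n : ℕ) :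
    Measurable fun ω => evenTime (fun i => J i ω) n := by
  have hcoe (m : ℕ) : MeasurableSet {ω | evenTime (fun i => J i ω) n = m} := by
    simpa [evenPath] using
      jumpSigma_le hmeas _ _ (measurableSet_evenPath J n m fun _ => Set.univ)
  refine measurable_to_countable' fun t => ?_
  induction t using ENat.recTopCoe with
  | top =>
    have : (fun ω => evenTime (fun i => J i ω) n) ⁻¹' {⊤} =
        (⋃ m : ℕ, {ω | evenTime (fun i => J i ω) n = m})ᶜ := by
      ext ω
      simp only [Set.mem_preimage, Set.mem_singleton_iff, Set.mem_compl_iff, Set.mem_iUnion,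
        Set.mem_ofPred_eq, not_exists, ENat.eq_top_iff_forall_ne]
      exact forall_congr' fun m => ne_comm
    rw [this]
    exact (MeasurableSet.iUnion hcoe).compl
  | coe m => exact hcoe m

theorem measurable_evenValue (hmeas : ∀ i, Measurable (J i)) (n : ℕ) :
    Measurable fun ω => evenValue (fun i => J i ω) n :=
  (measurable_from_prod_countable_left (f := fun p : Ω × ℕ∞ => ∑ i ∈ range p.2.toNat, J i p.1)
    fun t => Finset.measurable_sum (range t.toNat) fun i _ => hmeas i).comp
      (measurable_id.prodMk (measurable_evenTime hmeas n))

theorem ae_evenTime_lt_top [IsProbabilityMeasure P] (hmeas : ∀ i, Measurable (J i)) {n : ℕ}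
    (h : P {ω | evenTime (fun i => J i ω) n < ⊤} = 1) :
    ∀ᵐ ω ∂P, evenTime (fun i => J i ω) n < ⊤ :=
  (ae_iff_measure_eq (p := fun ω => evenTime (fun i => J i ω) n < ⊤)
    (measurable_evenTime hmeas n (Set.to_countable _).measurableSet).nullMeasurableSet).2
      (by rw [h, measure_univ])

end Probability

theorem embedded_even_walk_is_symmetric_random_walk_general
    {Ω : Type*} [MeasurableSpace Ω] (P : Measure Ω) [IsProbabilityMeasure P]
    (J : ℕ → Ω → ℤ) (hmeas : ∀ k, Measurable (J k))
    (hindep : iIndepFun J P)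
    (hident : ∀ k, Measure.map (J k) P = Measure.map (J 0) P)
    (hsymm : Measure.map (J 0) P = Measure.map (fun ω => -(J 0 ω)) P)
    (T : ℕ → Ω → ℕ∞)
    (hT0 : ∀ ω, T 0 ω = 0)
    (hTsucc : ∀ n ω, T (n + 1) ω =
      sInf {k : ℕ∞ | ∃ m : ℕ, k = (m : ℕ∞) ∧ T n ω < (m : ℕ∞) ∧
        (2 : ℤ) ∣ ∑ i ∈ Finset.range m, J i ω})
    (hTfin : ∀ n : ℕ, P {ω | T n ω < ⊤} = 1)
    (X : ℕ → Ω → ℤ)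
    (hX : ∀ n ω, X n ω = ∑ i ∈ Finset.range ((T n ω).toNat), J i ω) :
    (∀ n : ℕ, ∀ᵐ ω ∂P, (2 : ℤ) ∣ (X (n + 1) ω - X n ω)) ∧
    iIndepFun (fun n ω => X (n + 1) ω - X n ω) P ∧
    (∀ n : ℕ, Measure.map (fun ω => X (n + 1) ω - X n ω) P
      = Measure.map (fun ω => X 1 ω) P) ∧
    Measure.map (fun ω => X 1 ω) P = Measure.map (fun ω => -(X 1 ω)) P := by
  obtain rfl : T = fun n ω => evenTime (fun i => J i ω) n :=
    funext fun n => funext fun ω =>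
      congrFun (eq_evenTime (t := fun n => T n ω) (hT0 ω) fun n => hTsucc n ω) n
  obtain rfl : X = fun n ω => evenValue (fun i => J i ω) n := funext fun n => funext (hX n)
  beta_reduce at hTfin ⊢
  have := Measure.isProbabilityMeasure_map (μ := P) (hmeas 0).aemeasurable
  have hmeasX := measurable_evenValue hmeas
  have hfin (n : ℕ) := ae_evenTime_lt_top hmeas (hTfin n)
  have hprod (n : ℕ) := measure_biInter_increment_evenValue hmeas hindep hident (hfin n)
  have hX1 (B : Set ℤ) :
      P ((fun ω => evenValue (fun i => J i ω) 1) ⁻¹' B) = excursionProb (P.map (J 0)) B := by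
    simpa using measure_preimage_eq_of_prod hprod 0 B
  refine ⟨fun n => ?_, iIndepFun_of_prod hprod, fun n => ?_, ?_⟩
  · filter_upwards [hfin (n + 1)] with ω hω
    exact dvd_sub (two_dvd_evenValue hω.ne) (two_dvd_evenValue (evenTime_ne_top_of_succ hω.ne))
  · ext B hB
    rw [Measure.map_apply (f := fun ω => evenValue (fun i => J i ω) (n + 1) -
        evenValue (fun i => J i ω) n) ((hmeasX _).sub (hmeasX _)) hB,
      Measure.map_apply (hmeasX 1) hB, measure_preimage_eq_of_prod hprod n B, hX1]
  · have hneg : (P.map (J 0)).map Neg.neg = P.map (J 0) := by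
      rw [Measure.map_map measurable_neg (hmeas 0)]
      exact hsymm.symm
    ext B hB
    rw [Measure.map_apply (hmeasX 1) hB,
      Measure.map_apply (f := fun ω => -evenValue (fun i => J i ω) 1) (hmeasX 1).neg hB, hX1]
    exact (excursionProb_neg hneg B).symm.trans (hX1 (Neg.neg ⁻¹' B)).symm

/-- for a symmetric random walk on ℤ whose jump is even with
probability `< 1`, the process `X_n := S_{T_n}` of values at the successive
(a.s. finite) visits of `S` to the even integers is a symmetric random walk on
`2ℤ`: its increments are i.i.d., take values in `2ℤ`, and `X_1` has a symmetric
distribution. -/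
theorem embedded_even_walk_is_symmetric_random_walk
    {Ω : Type*} [MeasurableSpace Ω] (P : Measure Ω) [IsProbabilityMeasure P]
    (J : ℕ → Ω → ℤ) (hmeas : ∀ k, Measurable (J k))
    (hindep : iIndepFun J P)
    (hident : ∀ k, Measure.map (J k) P = Measure.map (J 0) P)
    (hsymm : Measure.map (J 0) P = Measure.map (fun ω => -(J 0 ω)) P)
    (heven : P {ω | (2 : ℤ) ∣ J 0 ω} < 1)
    (T : ℕ → Ω → ℕ∞)
    (hT0 : ∀ ω, T 0 ω = 0)
    (hTsucc : ∀ n ω, T (n + 1) ω =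
      sInf {k : ℕ∞ | ∃ m : ℕ, k = (m : ℕ∞) ∧ T n ω < (m : ℕ∞) ∧
        (2 : ℤ) ∣ ∑ i ∈ Finset.range m, J i ω})
    (hTfin : ∀ n : ℕ, P {ω | T n ω < ⊤} = 1)
    (X : ℕ → Ω → ℤ)
    (hX : ∀ n ω, X n ω = ∑ i ∈ Finset.range ((T n ω).toNat), J i ω) :
    (∀ n : ℕ, ∀ᵐ ω ∂P, (2 : ℤ) ∣ (X (n + 1) ω - X n ω)) ∧
    iIndepFun (fun n ω => X (n + 1) ω - X n ω) P ∧
    (∀ n : ℕ, Measure.map (fun ω => X (n + 1) ω - X n ω) P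
      = Measure.map (fun ω => X 1 ω) P) ∧
    Measure.map (fun ω => X 1 ω) P = Measure.map (fun ω => -(X 1 ω)) P :=
  embedded_even_walk_is_symmetric_random_walk_general P J hmeas hindep hident hsymm T hT0 hTsucc
    hTfin X hX
end

section
/- Fix 0 < α < 1 and β > 0. Let (S_n) be the symmetric random walk on ℤ whose jump distribution is P(J_1 = n) = P(J_1 = −n) = c^{−1} p_n for n ≥ 1 and P(J_1 = 0) = 0, where p_{2n} = (2n)^{−α−1} and p_{2n−1} = (2n−1)^{−β−1} for n ≥ 1, and c = 2∑_{n≥1} p_n is the normalizing constant. Then (S_n) is transient, i.e. |S_n| → ∞ almost surely as n → ∞. -/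
/-!
Let `φ` be the characteristic function of the jump law. Fourier inversion on `[-π, π]` bounds
`P(S_n = x)` by `π⁻¹ ∫_{(0,π]} |φ|ⁿ`, hence `∑ₙ P(S_n = x) ≤ π⁻¹ ∫_{(0,π]} (1 - |φ|)⁻¹`; when this
is finite, Borel–Cantelli shows that every integer is visited only finitely often.

The law is symmetric, so `φ` is real. The atoms at `1` and `2` keep `|φ| < 1` on `(0, π]`, while the
even atoms alone give `1 - φ(t) ≳ t^α` near `0`: about `1/t` even integers `m` have
`tm ∈ [π/2, π]`, and each contributes `P(J = m) (1 - cos tm) ≳ m^(-α-1) ≍ t^(α+1)`. Since `α < 1`,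
`(1 - |φ t|)⁻¹ ≲ t^(-α)` is integrable.
-/

open MeasureTheory Filter ProbabilityTheory Set Real

theorem integral_exp_mul_int_mul_I (k : ℤ) :
    ∫ t in -π..π, Complex.exp (t * k * Complex.I) = if k = 0 then 2 * π else 0 := by
  split_ifs with hk
  · simp [hk, two_mul]
  · have hc : (k * Complex.I : ℂ) ≠ 0 := by simpa using hk
    have h_period : Complex.exp (k * Complex.I * π) =
        Complex.exp (k * Complex.I * ↑(-π)) * Complex.exp (2 * π * Complex.I) ^ k := by
      rw [← Complex.exp_int_mul, ← Complex.exp_add]; push_cast; ring_nf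
    have h_comm : ∀ t : ℝ, (t * k * Complex.I : ℂ) = k * Complex.I * t := fun t => by ring
    simp_rw [h_comm]
    rw [integral_exp_mul_complex hc, h_period, Complex.exp_two_pi_mul_I, one_zpow, mul_one,
      sub_self, zero_div, Complex.ofReal_zero]

theorem norm_exp_mul_int_mul_I (t : ℝ) (k : ℤ) : ‖Complex.exp (t * k * Complex.I)‖ = 1 := by
  rw [← Complex.ofReal_intCast, ← Complex.ofReal_mul, Complex.norm_exp_ofReal_mul_I]

theorem charFun_map_intCast_apply {Ω : Type*} [MeasurableSpace Ω] {P : Measure Ω}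
    {Y : Ω → ℤ} (hY : Measurable Y) (t : ℝ) :
    charFun (P.map fun ω => (Y ω : ℝ)) t = ∫ ω, Complex.exp (t * Y ω * Complex.I) ∂P := by
  rw [charFun_apply_real, integral_map (by fun_prop) (by fun_prop)]
  simp only [Complex.ofReal_intCast]

theorem two_pi_mul_measureReal_eq_integral_charFun {Ω : Type*} [MeasurableSpace Ω]
    {P : Measure Ω} [IsFiniteMeasure P] {Y : Ω → ℤ} (hY : Measurable Y) (x : ℤ) :
    (2 * π * P.real {ω | Y ω = x} : ℂ) = ∫ t in -π..π,
      Complex.exp (t * (-x : ℤ) * Complex.I) * charFun (P.map fun ω => (Y ω : ℝ)) t := by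
  have : IsFiniteMeasure (volume.restrict (uIoc (-π) π)) := by
    rw [uIoc_of_le (by linarith [pi_pos])]; infer_instance
  have h_meas : Measurable fun z : ℝ × Ω => Complex.exp (z.1 * (Y z.2 - x : ℤ) * Complex.I) := by
    fun_prop
  have h_int : Integrable (Function.uncurry fun (t : ℝ) ω =>
      Complex.exp (t * (Y ω - x : ℤ) * Complex.I)) ((volume.restrict (uIoc (-π) π)).prod P) :=
    (integrable_const (1 : ℝ)).mono' h_meas.aestronglyMeasurable
      (ae_of_all _ fun z => (norm_exp_mul_int_mul_I _ _).le)
  have h_exp : ∀ (t : ℝ) ω, Complex.exp (t * (-x : ℤ) * Complex.I) *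
      Complex.exp (t * Y ω * Complex.I) = Complex.exp (t * (Y ω - x : ℤ) * Complex.I) :=
    fun t ω => by rw [← Complex.exp_add]; push_cast; ring_nf
  simp_rw [charFun_map_intCast_apply hY, ← integral_const_mul, h_exp]
  rw [intervalIntegral_integral_swap h_int]
  simp_rw [integral_exp_mul_int_mul_I, sub_eq_zero]
  have h_ind : (fun ω => if Y ω = x then 2 * π else 0) =
      {ω | Y ω = x}.indicator fun _ => 2 * π := by
    ext ω; simp [indicator]
  rw [integral_complex_ofReal, h_ind,
    integral_indicator_const _ (measurableSet_eq_fun hY measurable_const), smul_eq_mul]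
  push_cast; ring

theorem intervalIntegral_neg_pi_pi_norm_charFun_pow (μ : Measure ℝ) [IsFiniteMeasure μ] (n : ℕ) :
    ∫ t in -π..π, ‖charFun μ t‖ ^ n = 2 * ∫ t in Ioc 0 π, ‖charFun μ t‖ ^ n := by
  have h_cont : Continuous fun t => ‖charFun μ t‖ ^ n := by fun_prop
  have h_even : ∫ t in -π..0, ‖charFun μ t‖ ^ n = ∫ t in 0..π, ‖charFun μ t‖ ^ n := by
    rw [← neg_zero, ← intervalIntegral.integral_comp_neg]
    simp [charFun_neg]
  rw [← intervalIntegral.integral_add_adjacent_intervals (b := 0) (h_cont.intervalIntegrable _ _)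
    (h_cont.intervalIntegrable _ _), h_even, intervalIntegral.integral_of_le pi_pos.le]
  ring

theorem ae_tendsto_abs_atTop_of_summable_measureReal {Ω : Type*} [MeasurableSpace Ω]
    {P : Measure Ω} [IsFiniteMeasure P] {S : ℕ → Ω → ℤ}
    (h : ∀ x : ℤ, Summable fun n => P.real {ω | S n ω = x}) :
    ∀ᵐ ω ∂P, Tendsto (fun n => |S n ω|) atTop atTop := by
  have h_ae : ∀ᵐ ω ∂P, ∀ x : ℤ, ∀ᶠ n in atTop, S n ω ≠ x := by
    refine ae_all_iff.2 fun x => ae_eventually_notMem (s := fun n => {ω | S n ω = x}) ?_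
    have h_eq : ∀ n, P {ω | S n ω = x} = ENNReal.ofReal (P.real {ω | S n ω = x}) := fun n =>
      (ofReal_measureReal).symm
    rw [tsum_congr h_eq, ← ENNReal.ofReal_tsum_of_nonneg (fun n => measureReal_nonneg) (h x)]
    exact ENNReal.ofReal_ne_top
  filter_upwards [h_ae] with ω hω
  refine tendsto_atTop.2 fun b => ?_
  filter_upwards [(Finset.Icc (-b) b).eventually_all.2 fun x _ => hω x] with n hn
  by_contra! hlt
  exact hn (S n ω) (Finset.mem_Icc.2 (abs_le.1 hlt.le)) rfl

theorem sub_sub_one_le_card_Icc_ceil_floor {a b : ℝ} (ha : 0 ≤ a) :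
    b - a - 1 ≤ (Finset.Icc ⌈a⌉₊ ⌊b⌋₊).card := by
  have h_card : ⌊b⌋₊ + 1 ≤ (Finset.Icc ⌈a⌉₊ ⌊b⌋₊).card + ⌈a⌉₊ := by
    rw [Nat.card_Icc]; omega
  have h_real : (⌊b⌋₊ + 1 : ℝ) ≤ (Finset.Icc ⌈a⌉₊ ⌊b⌋₊).card + ⌈a⌉₊ := by exact_mod_cast h_card
  linarith [Nat.lt_floor_add_one b, Nat.ceil_lt_add_one ha]

theorem exists_pos_rpow_le_one_sub_of_continuousOn {g : ℝ → ℝ} {α δ b a₀ : ℝ}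
    (hg : ContinuousOn g (Icc δ b)) (hα : 0 ≤ α) (hδ : 0 < δ) (hδb : δ ≤ b) (ha₀ : 0 < a₀)
    (h_near : ∀ t ∈ Ioc 0 δ, a₀ * t ^ α ≤ 1 - g t) (h_lt : ∀ t ∈ Icc δ b, g t < 1) :
    ∃ a > 0, ∀ t ∈ Ioc 0 b, a * t ^ α ≤ 1 - g t := by
  obtain ⟨s, hs, hs_max⟩ := isCompact_Icc.exists_isMaxOn (nonempty_Icc.2 hδb) hg
  have hb : 0 < b := hδ.trans_le hδb
  have h_gap : 0 < 1 - g s := sub_pos.2 (h_lt s hs)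
  refine ⟨min a₀ ((1 - g s) / b ^ α), lt_min ha₀ (by positivity), fun t ⟨ht₀, htb⟩ => ?_⟩
  have htα : 0 ≤ t ^ α := rpow_nonneg ht₀.le α
  rcases le_or_gt t δ with htδ | hδt
  · exact (mul_le_mul_of_nonneg_right (min_le_left _ _) htα).trans (h_near t ⟨ht₀, htδ⟩)
  · calc min a₀ ((1 - g s) / b ^ α) * t ^ α ≤ (1 - g s) / b ^ α * b ^ α :=
          mul_le_mul (min_le_right _ _) (rpow_le_rpow ht₀.le htb hα) htα (by positivity)
      _ = 1 - g s := div_mul_cancel₀ _ (rpow_pos_of_pos hb α).ne'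
      _ ≤ 1 - g t := sub_le_sub_left (hs_max ⟨hδt.le, htb⟩) 1

theorem integrableOn_inv_of_rpow_le {f : ℝ → ℝ} {a α b : ℝ} (hf : ContinuousOn f (Ioc 0 b))
    (ha : 0 < a) (hα : α < 1) (h : ∀ t ∈ Ioc 0 b, a * t ^ α ≤ f t) :
    IntegrableOn (fun t => (f t)⁻¹) (Ioc 0 b) := by
  have hf_pos : ∀ t ∈ Ioc 0 b, 0 < f t := fun t ht =>
    (mul_pos ha (rpow_pos_of_pos ht.1 α)).trans_le (h t ht)
  have h_rpow : IntegrableOn (fun t : ℝ => a⁻¹ * t ^ (-α)) (Ioc 0 b) :=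
    (intervalIntegral.intervalIntegrable_rpow' (a := 0) (b := b) (by linarith)).1.const_mul a⁻¹
  refine h_rpow.mono' ((hf.inv₀ fun t ht => (hf_pos t ht).ne').aestronglyMeasurable
    measurableSet_Ioc) ((ae_restrict_iff' measurableSet_Ioc).2 (ae_of_all _ fun t ht => ?_))
  rw [Real.norm_of_nonneg (inv_nonneg.2 (hf_pos t ht).le), rpow_neg ht.1.le, ← mul_inv]
  exact inv_anti₀ (mul_pos ha (rpow_pos_of_pos ht.1 α)) (h t ht)

theorem sum_measureReal_singleton_mul_le_integral {X : Type*} [MeasurableSpace X]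
    [MeasurableSingletonClass X] {μ : Measure X} {f : X → ℝ} (hf : Integrable f μ)
    (hf_nonneg : ∀ x, 0 ≤ f x) (F : Finset X) :
    ∑ x ∈ F, μ.real {x} * f x ≤ ∫ x, f x ∂μ := by
  simp_rw [← smul_eq_mul, ← setIntegral_finset F hf.integrableOn]
  exact setIntegral_le_integral hf (ae_of_all _ hf_nonneg)

section CharFunReal

variable {ν : Measure ℝ}

theorem re_charFun_eq_integral_cos [IsFiniteMeasure ν] (t : ℝ) :
    (charFun ν t).re = ∫ x, Real.cos (t * x) ∂ν := by
  have h_int : Integrable (fun x : ℝ => Complex.exp (t * x * Complex.I)) ν :=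
    (integrable_const (1 : ℝ)).mono' (by fun_prop) (ae_of_all _ fun x => by
      rw [← Complex.ofReal_mul, Complex.norm_exp_ofReal_mul_I])
  rw [charFun_apply_real, ← RCLike.re_to_complex, ← integral_re h_int]
  simp_rw [RCLike.re_to_complex, ← Complex.ofReal_mul, Complex.exp_ofReal_mul_I_re]

theorem integrable_cos_mul [IsFiniteMeasure ν] (t : ℝ) :
    Integrable (fun x : ℝ => Real.cos (t * x)) ν :=
  (integrable_const (1 : ℝ)).mono' (by fun_prop) (ae_of_all _ fun x => abs_cos_le_one _)

theorem sum_measureReal_mul_one_sub_cos_le [IsProbabilityMeasure ν] (t : ℝ) (F : Finset ℝ) :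
    ∑ x ∈ F, ν.real {x} * (1 - Real.cos (t * x)) ≤ 1 - (charFun ν t).re := by
  calc ∑ x ∈ F, ν.real {x} * (1 - Real.cos (t * x))
      ≤ ∫ x, (1 - Real.cos (t * x)) ∂ν := sum_measureReal_singleton_mul_le_integral
        ((integrable_const 1).sub (integrable_cos_mul t)) (fun x => sub_nonneg.2 (cos_le_one _)) F
    _ = 1 - (charFun ν t).re := by
      rw [integral_sub (integrable_const 1) (integrable_cos_mul t), re_charFun_eq_integral_cos]
      simp

theorem sum_measureReal_mul_one_add_cos_le [IsProbabilityMeasure ν] (t : ℝ) (F : Finset ℝ) :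
    ∑ x ∈ F, ν.real {x} * (1 + Real.cos (t * x)) ≤ 1 + (charFun ν t).re := by
  calc ∑ x ∈ F, ν.real {x} * (1 + Real.cos (t * x))
      ≤ ∫ x, (1 + Real.cos (t * x)) ∂ν := sum_measureReal_singleton_mul_le_integral
        ((integrable_const 1).add (integrable_cos_mul t))
        (fun x => by dsimp only [Pi.add_apply]; linarith [neg_one_le_cos (t * x)]) F
    _ = 1 + (charFun ν t).re := by
      rw [integral_add (integrable_const 1) (integrable_cos_mul t), re_charFun_eq_integral_cos]
      simp

end CharFunReal

section Symmetric

variable {ν : Measure ℝ}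

theorem ofReal_re_charFun_of_map_neg (hν : ν.map Neg.neg = ν) (t : ℝ) :
    ((charFun ν t).re : ℂ) = charFun ν t := by
  rw [← Complex.conj_eq_iff_re, ← charFun_neg, ← neg_one_mul, ← charFun_map_mul]
  congr 1
  convert hν using 2
  ext x; simp

theorem norm_charFun_of_map_neg (hν : ν.map Neg.neg = ν) (t : ℝ) :
    ‖charFun ν t‖ = |(charFun ν t).re| := by
  rw [← ofReal_re_charFun_of_map_neg hν, Complex.norm_real, Real.norm_eq_abs, Complex.ofReal_re]

end Symmetric

section HeavyEvenTail

variable {ν : Measure ℝ} [IsProbabilityMeasure ν]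

theorem neg_one_lt_re_charFun (h₁ : 0 < ν.real {1}) (h₂ : 0 < ν.real {2}) (t : ℝ) :
    -1 < (charFun ν t).re := by
  have h := sum_measureReal_mul_one_add_cos_le (ν := ν) t {1, 2}
  rw [Finset.sum_pair (by norm_num), mul_one, mul_comm t, cos_two_mul] at h
  rcases le_or_gt (Real.cos t) (-1 / 2) with hc | hc
  · have h_sq : 1 / 4 ≤ Real.cos t ^ 2 := by nlinarith
    nlinarith [mul_nonneg h₁.le (by linarith [neg_one_le_cos t] : 0 ≤ 1 + Real.cos t),
      mul_le_mul_of_nonneg_left h_sq h₂.le]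
  · nlinarith [mul_nonneg h₂.le (sq_nonneg (Real.cos t))]

theorem re_charFun_lt_one (h₁ : 0 < ν.real {1}) {t : ℝ} (ht₀ : 0 < t) (ht : t < 2 * π) :
    (charFun ν t).re < 1 := by
  have h := sum_measureReal_mul_one_sub_cos_le (ν := ν) t {1}
  rw [Finset.sum_singleton, mul_one] at h
  have h_cos : Real.cos t < 1 := (cos_le_one t).lt_of_ne fun h_eq =>
    ht₀.ne' ((cos_eq_one_iff_of_lt_of_lt (by linarith) ht).1 h_eq)
  nlinarith [mul_pos h₁ (sub_pos.2 h_cos)]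

theorem measureReal_one_le_one_add_re_charFun {t : ℝ} (ht₀ : 0 ≤ t) (ht : t ≤ π / 2) :
    ν.real {1} ≤ 1 + (charFun ν t).re := by
  have h := sum_measureReal_mul_one_add_cos_le (ν := ν) t {1}
  rw [Finset.sum_singleton, mul_one] at h
  nlinarith [cos_nonneg_of_mem_Icc ⟨by linarith, ht⟩, measureReal_nonneg (μ := ν) (s := {1})]

theorem rpow_le_one_sub_re_charFun {α κ : ℝ} (hα : 0 ≤ α) (hκ : 0 ≤ κ)
    (h_tail : ∀ j : ℕ, 0 < j → κ * (2 * j : ℝ) ^ (-α - 1) ≤ ν.real {2 * (j : ℝ)})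
    {t : ℝ} (ht₀ : 0 < t) (ht : t ≤ π / 8) :
    κ / (8 * π ^ α) * t ^ α ≤ 1 - (charFun ν t).re := by
  set A := π / (4 * t) with hA_def
  have htA : t * A = π / 4 := by rw [hA_def]; field_simp
  have hA : 2 ≤ A := by rw [hA_def, le_div_iff₀ (by positivity)]; linarith
  -- the even integers `m = 2j` with `tm ∈ [π/2, π]`
  set F : Finset ℝ := (Finset.Icc ⌈A⌉₊ ⌊2 * A⌋₊).image fun j : ℕ => 2 * (j : ℝ)
  have h_term : ∀ x ∈ F, κ * (π / t) ^ (-α - 1) ≤ ν.real {x} * (1 - Real.cos (t * x)) := by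
    simp only [F, Finset.mem_image, Finset.mem_Icc]
    rintro _ ⟨j, ⟨hj₁, hj₂⟩, rfl⟩
    have hAj : A ≤ j := Nat.ceil_le.1 hj₁
    have hjA : (j : ℝ) ≤ 2 * A := (Nat.le_floor_iff (by positivity)).1 hj₂
    have hj_pos : 0 < j := by exact_mod_cast (show (0 : ℝ) < j by linarith)
    have h_le : t * (2 * j) ≤ π := by nlinarith
    have h_cos : Real.cos (t * (2 * j)) ≤ 0 :=
      cos_nonpos_of_pi_div_two_le_of_le (by nlinarith) (by linarith [pi_pos])
    calc κ * (π / t) ^ (-α - 1) ≤ κ * (2 * j : ℝ) ^ (-α - 1) :=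
          mul_le_mul_of_nonneg_left (rpow_le_rpow_of_nonpos (by positivity)
            ((le_div_iff₀' ht₀).2 h_le) (by linarith)) hκ
      _ ≤ ν.real {2 * (j : ℝ)} := h_tail j hj_pos
      _ ≤ ν.real {2 * (j : ℝ)} * (1 - Real.cos (t * (2 * j))) :=
          le_mul_of_one_le_right measureReal_nonneg (by linarith)
  have h_card : A / 2 ≤ F.card := by
    rw [Finset.card_image_of_injective _ fun i j h => by simpa using h]
    linarith [sub_sub_one_le_card_Icc_ceil_floor (a := A) (b := 2 * A) (by positivity)]
  have h_eq : A / 2 * (κ * (π / t) ^ (-α - 1)) = κ / (8 * π ^ α) * t ^ α := by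
    rw [show -α - 1 = -(α + 1) by ring, rpow_neg (by positivity), div_rpow pi_pos.le ht₀.le,
      rpow_add_one pi_pos.ne', rpow_add_one ht₀.ne', hA_def]
    field_simp
    ring
  calc κ / (8 * π ^ α) * t ^ α = A / 2 * (κ * (π / t) ^ (-α - 1)) := h_eq.symm
    _ ≤ F.card * (κ * (π / t) ^ (-α - 1)) := mul_le_mul_of_nonneg_right h_card (by positivity)
    _ ≤ ∑ x ∈ F, ν.real {x} * (1 - Real.cos (t * x)) := by
        simpa using Finset.card_nsmul_le_sum F _ _ h_term
    _ ≤ 1 - (charFun ν t).re := sum_measureReal_mul_one_sub_cos_le t F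

theorem norm_charFun_lt_one (hν : ν.map Neg.neg = ν) (h₁ : 0 < ν.real {1})
    (h₂ : 0 < ν.real {2}) {t : ℝ} (ht : t ∈ Ioc 0 π) : ‖charFun ν t‖ < 1 := by
  rw [norm_charFun_of_map_neg hν, abs_lt]
  exact ⟨neg_one_lt_re_charFun h₁ h₂ t, re_charFun_lt_one h₁ ht.1 (by linarith [ht.2, pi_pos])⟩

theorem exists_pos_rpow_le_one_sub_norm_charFun {α κ : ℝ} (hν : ν.map Neg.neg = ν)
    (hα : 0 ≤ α) (hκ : 0 < κ) (h₁ : 0 < ν.real {1})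
    (h_tail : ∀ j : ℕ, 0 < j → κ * (2 * j : ℝ) ^ (-α - 1) ≤ ν.real {2 * (j : ℝ)}) :
    ∃ a > 0, ∀ t ∈ Ioc 0 (π / 8), a * t ^ α ≤ 1 - ‖charFun ν t‖ := by
  set a := min (κ / (8 * π ^ α)) (ν.real {1} / (π / 8) ^ α)
  refine ⟨a, by positivity, fun t ⟨ht₀, ht⟩ => ?_⟩
  have htα : 0 ≤ t ^ α := rpow_nonneg ht₀.le α
  have h_sub : a * t ^ α ≤ 1 - (charFun ν t).re :=
    (mul_le_mul_of_nonneg_right (min_le_left _ _) htα).trans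
      (rpow_le_one_sub_re_charFun hα hκ.le h_tail ht₀ ht)
  have h_add : a * t ^ α ≤ 1 + (charFun ν t).re := calc
    _ ≤ ν.real {1} / (π / 8) ^ α * t ^ α := mul_le_mul_of_nonneg_right (min_le_right _ _) htα
    _ = ν.real {1} * (t / (π / 8)) ^ α := by rw [div_rpow ht₀.le (by positivity)]; ring
    _ ≤ ν.real {1} := mul_le_of_le_one_right measureReal_nonneg
      (rpow_le_one (by positivity) ((div_le_one (by positivity)).2 ht) hα)
    _ ≤ 1 + (charFun ν t).re := measureReal_one_le_one_add_re_charFun ht₀.le (by linarith)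
  rw [norm_charFun_of_map_neg hν, le_sub_comm]
  exact abs_le.2 ⟨by linarith, by linarith⟩

end HeavyEvenTail

theorem measureReal_map_intCast_singleton (μ : Measure ℤ) (m : ℤ) :
    (μ.map (Int.cast : ℤ → ℝ)).real {(m : ℝ)} = μ.real {m} := by
  have h_preimage : (Int.cast : ℤ → ℝ) ⁻¹' {(m : ℝ)} = {m} := by ext; simp
  rw [measureReal_def, Measure.map_apply (measurable_of_countable _) (measurableSet_singleton _),
    h_preimage, measureReal_def]

theorem map_neg_map_intCast {μ : Measure ℤ} (h : ∀ m, μ {-m} = μ {m}) :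
    (μ.map (Int.cast : ℤ → ℝ)).map Neg.neg = μ.map Int.cast := by
  have h_comm : Neg.neg ∘ (Int.cast : ℤ → ℝ) = Int.cast ∘ Neg.neg := by ext; simp
  have h_neg : μ.map Neg.neg = μ := Measure.ext_iff_singleton.2 fun m => by
    have h_preimage : Neg.neg ⁻¹' {m} = {-m} := by ext; simp
    rw [Measure.map_apply measurable_neg (measurableSet_singleton m), h_preimage, h]
  rw [Measure.map_map measurable_neg (measurable_of_countable _), h_comm,
    ← Measure.map_map (measurable_of_countable _) measurable_neg, h_neg]

section RandomWalk

variable {Ω : Type*} [MeasurableSpace Ω] {P : Measure Ω} {J : ℕ → Ω → ℤ}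

theorem charFun_map_sum_range_eq_pow (hmeas : ∀ k, Measurable (J k)) (hindep : iIndepFun J P)
    (hident : ∀ k, P.map (J k) = P.map (J 0)) (n : ℕ) :
    charFun (P.map fun ω => ((∑ k ∈ Finset.range n, J k ω : ℤ) : ℝ)) =
      charFun (P.map fun ω => (J 0 ω : ℝ)) ^ n := by
  have h_indep : iIndepFun (fun k => (Int.cast : ℤ → ℝ) ∘ J k) P :=
    hindep.comp (fun _ => Int.cast) fun _ => measurable_of_countable _
  have h_law : ∀ k, P.map ((Int.cast : ℤ → ℝ) ∘ J k) = P.map ((Int.cast : ℤ → ℝ) ∘ J 0) :=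
    fun k => by
      rw [← Measure.map_map (measurable_of_countable _) (hmeas k), hident k,
        Measure.map_map (measurable_of_countable _) (hmeas 0)]
  have h_sum := (h_indep.precomp Subtype.val_injective).charFun_map_fun_finsetSum_eq_prod
    (s := Finset.range n) fun k _ =>
      (measurable_of_countable _).comp_aemeasurable (hmeas k).aemeasurable
  rw [Finset.prod_congr rfl fun k _ => congrArg charFun (h_law k), Finset.prod_const,
    Finset.card_range] at h_sum
  push_cast
  exact h_sum

theorem measureReal_sum_range_eq_le [IsProbabilityMeasure P] (hmeas : ∀ k, Measurable (J k))
    (hindep : iIndepFun J P) (hident : ∀ k, P.map (J k) = P.map (J 0)) (n : ℕ) (x : ℤ) :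
    P.real {ω | ∑ k ∈ Finset.range n, J k ω = x} ≤
      π⁻¹ * ∫ t in Ioc 0 π, ‖charFun (P.map fun ω => (J 0 ω : ℝ)) t‖ ^ n := by
  set φ := charFun (P.map fun ω => (J 0 ω : ℝ))
  have h_inv := two_pi_mul_measureReal_eq_integral_charFun (P := P)
    (Finset.measurable_sum (Finset.range n) fun k _ => hmeas k) x
  rw [charFun_map_sum_range_eq_pow hmeas hindep hident] at h_inv
  have h_two_pi : 2 * π * P.real {ω | ∑ k ∈ Finset.range n, J k ω = x} ≤
      2 * ∫ t in Ioc 0 π, ‖φ t‖ ^ n := calc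
    _ = ‖(2 * π * P.real {ω | ∑ k ∈ Finset.range n, J k ω = x} : ℂ)‖ := by
      norm_cast; exact (Real.norm_of_nonneg (by positivity)).symm
    _ ≤ ∫ t in -π..π, ‖φ t‖ ^ n := by
      rw [h_inv]
      simpa only [Pi.pow_apply, norm_mul, norm_pow, norm_exp_mul_int_mul_I, one_mul] using
        intervalIntegral.norm_integral_le_integral_norm (μ := volume)
          (f := fun t => Complex.exp (t * (-x : ℤ) * Complex.I) * φ t ^ n)
          (neg_le_self pi_pos.le)
    _ = 2 * ∫ t in Ioc 0 π, ‖φ t‖ ^ n := intervalIntegral_neg_pi_pi_norm_charFun_pow _ n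
  rw [inv_mul_eq_div, le_div_iff₀ pi_pos]
  linarith

theorem ae_tendsto_abs_sum_range_atTop_of_integrableOn [IsProbabilityMeasure P]
    (hmeas : ∀ k, Measurable (J k)) (hindep : iIndepFun J P)
    (hident : ∀ k, P.map (J k) = P.map (J 0))
    (h_lt : ∀ t ∈ Ioc 0 π, ‖charFun (P.map fun ω => (J 0 ω : ℝ)) t‖ < 1)
    (h_int :
      IntegrableOn (fun t => (1 - ‖charFun (P.map fun ω => (J 0 ω : ℝ)) t‖)⁻¹) (Ioc 0 π)) :
    ∀ᵐ ω ∂P, Tendsto (fun n => |∑ k ∈ Finset.range n, J k ω|) atTop atTop := by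
  set φ := charFun (P.map fun ω => (J 0 ω : ℝ))
  have h_pow_int : ∀ n, IntegrableOn (fun t => ‖φ t‖ ^ n) (Ioc 0 π) := fun n =>
    (continuous_charFun.norm.pow n).integrableOn_Ioc
  have h_summable : Summable fun n => ∫ t in Ioc 0 π, ‖φ t‖ ^ n := by
    refine summable_of_sum_range_le (c := ∫ t in Ioc 0 π, (1 - ‖φ t‖)⁻¹)
      (fun n => setIntegral_nonneg measurableSet_Ioc fun t _ => by positivity) fun N => ?_
    rw [← integral_finsetSum _ fun n _ => h_pow_int n]
    refine setIntegral_mono_on (integrable_finsetSum _ fun n _ => h_pow_int n) h_int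
      measurableSet_Ioc fun t ht => ?_
    have h_geom := geom_sum_Ico_le_of_lt_one (m := 0) (n := N) (norm_nonneg (φ t)) (h_lt t ht)
    rwa [← Finset.range_eq_Ico, pow_zero, one_div] at h_geom
  refine ae_tendsto_abs_atTop_of_summable_measureReal fun x => ?_
  exact (h_summable.mul_left π⁻¹).of_nonneg_of_le (fun n => measureReal_nonneg)
    fun n => measureReal_sum_range_eq_le hmeas hindep hident n x

theorem ae_tendsto_abs_sum_range_atTop_of_heavy_even_tail [IsProbabilityMeasure P] {α κ : ℝ}
    (hmeas : ∀ k, Measurable (J k)) (hindep : iIndepFun J P)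
    (hident : ∀ k, P.map (J k) = P.map (J 0)) (hsymm : ∀ m, P.map (J 0) {-m} = P.map (J 0) {m})
    (h₁ : 0 < (P.map (J 0)).real {1}) (hα₀ : 0 ≤ α) (hα₁ : α < 1) (hκ : 0 < κ)
    (h_tail : ∀ j : ℕ, 0 < j → κ * (2 * j : ℝ) ^ (-α - 1) ≤ (P.map (J 0)).real {2 * (j : ℤ)}) :
    ∀ᵐ ω ∂P, Tendsto (fun n => |∑ k ∈ Finset.range n, J k ω|) atTop atTop := by
  have : IsProbabilityMeasure (P.map (J 0)) :=
    Measure.isProbabilityMeasure_map (hmeas 0).aemeasurable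
  set ν := (P.map (J 0)).map (Int.cast : ℤ → ℝ)
  have hν : P.map (fun ω => (J 0 ω : ℝ)) = ν :=
    (Measure.map_map (measurable_of_countable _) (hmeas 0)).symm
  have : IsProbabilityMeasure ν :=
    Measure.isProbabilityMeasure_map (measurable_of_countable _).aemeasurable
  have hν_symm : ν.map Neg.neg = ν := map_neg_map_intCast hsymm
  have h₁' : 0 < ν.real {1} := by
    have h := measureReal_map_intCast_singleton (P.map (J 0)) 1
    rw [Int.cast_one] at h
    exact h ▸ h₁
  have h_tail' : ∀ j : ℕ, 0 < j → κ * (2 * j : ℝ) ^ (-α - 1) ≤ ν.real {2 * (j : ℝ)} := by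
    intro j hj
    have h := measureReal_map_intCast_singleton (P.map (J 0)) (2 * j)
    push_cast at h
    exact h ▸ h_tail j hj
  have h₂ : 0 < ν.real {2} := by
    have h := h_tail' 1 one_pos
    norm_num at h
    exact (by positivity : (0 : ℝ) < κ * 2 ^ (-α - 1)).trans_le h
  obtain ⟨a₀, ha₀, h_near⟩ := exists_pos_rpow_le_one_sub_norm_charFun hν_symm hα₀ hκ h₁' h_tail'
  have h_lt : ∀ t ∈ Ioc 0 π, ‖charFun ν t‖ < 1 := fun t ht =>
    norm_charFun_lt_one hν_symm h₁' h₂ ht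
  obtain ⟨a, ha, h_bound⟩ := exists_pos_rpow_le_one_sub_of_continuousOn
    (g := fun t => ‖charFun ν t‖) (by fun_prop) hα₀ (by positivity) (by linarith [pi_pos]) ha₀
    h_near fun t ht => h_lt t ⟨(by positivity : (0 : ℝ) < π / 8).trans_le ht.1, ht.2⟩
  rw [← hν] at h_lt h_bound
  exact ae_tendsto_abs_sum_range_atTop_of_integrableOn hmeas hindep hident h_lt
    (integrableOn_inv_of_rpow_le (by fun_prop) ha hα₁ h_bound)

end RandomWalk

section IntegerLaw

variable {μ : Measure ℤ} {p : ℕ → ℝ} {c : ℝ}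

theorem pos_of_measure_singleton_eq_ofReal_div [IsProbabilityMeasure μ]
    (hp : ∀ n : ℕ, 1 ≤ n → 0 ≤ p n) (h₀ : μ {0} = 0)
    (hlaw : ∀ n : ℕ, 1 ≤ n →
      μ {(n : ℤ)} = ENNReal.ofReal (p n / c) ∧ μ {-(n : ℤ)} = ENNReal.ofReal (p n / c)) :
    0 < c := by
  by_contra! hc
  have h_null : ∀ n : ℕ, 1 ≤ n → ENNReal.ofReal (p n / c) = 0 := fun n hn =>
    ENNReal.ofReal_eq_zero.2 (div_nonpos_of_nonneg_of_nonpos (hp n hn) hc)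
  refine IsProbabilityMeasure.ne_zero μ (Measure.ext_iff_singleton.2 fun m => ?_)
  obtain ⟨n, rfl | rfl⟩ := m.eq_nat_or_neg <;> rcases n.eq_zero_or_pos with rfl | hn
  · simpa using h₀
  · simpa [h_null n hn] using (hlaw n hn).1
  · simpa using h₀
  · simpa [h_null n hn] using (hlaw n hn).2

theorem measure_neg_singleton_of_law
    (hlaw : ∀ n : ℕ, 1 ≤ n →
      μ {(n : ℤ)} = ENNReal.ofReal (p n / c) ∧ μ {-(n : ℤ)} = ENNReal.ofReal (p n / c))
    (m : ℤ) : μ {-m} = μ {m} := by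
  obtain ⟨n, rfl | rfl⟩ := m.eq_nat_or_neg <;> rcases n.eq_zero_or_pos with rfl | hn
  · simp
  · rw [(hlaw n hn).1, (hlaw n hn).2]
  · simp
  · rw [neg_neg, (hlaw n hn).1, (hlaw n hn).2]

end IntegerLaw

theorem multiple_stability_walk_transient_general
    (α β : ℝ) (hα₀ : 0 < α) (hα₁ : α < 1)
    (p : ℕ → ℝ)
    (hpdef : ∀ n : ℕ, 1 ≤ n →
      p n = if Even n then (n : ℝ) ^ (-α - 1) else (n : ℝ) ^ (-β - 1))
    (c : ℝ)
    {Ω : Type*} [MeasurableSpace Ω] (P : Measure Ω) [IsProbabilityMeasure P]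
    (J : ℕ → Ω → ℤ) (hmeas : ∀ k, Measurable (J k))
    (hindep : iIndepFun J P)
    (hident : ∀ k, Measure.map (J k) P = Measure.map (J 0) P)
    (hzero : P {ω | J 0 ω = 0} = 0)
    (hlaw : ∀ n : ℕ, 1 ≤ n →
      P {ω | J 0 ω = (n : ℤ)} = ENNReal.ofReal (p n / c) ∧
      P {ω | J 0 ω = -(n : ℤ)} = ENNReal.ofReal (p n / c)) :
    ∀ᵐ ω ∂P, Tendsto (fun n : ℕ => |∑ k ∈ Finset.range n, J k ω|) atTop atTop := by
  have : IsProbabilityMeasure (P.map (J 0)) :=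
    Measure.isProbabilityMeasure_map (hmeas 0).aemeasurable
  have h_atom : ∀ m : ℤ, P.map (J 0) {m} = P {ω | J 0 ω = m} := fun m =>
    Measure.map_apply (hmeas 0) (measurableSet_singleton m)
  simp only [← h_atom] at hzero hlaw
  have hp_nonneg : ∀ n : ℕ, 1 ≤ n → 0 ≤ p n := fun n hn => by
    rw [hpdef n hn]; split_ifs <;> positivity
  have hc : 0 < c := pos_of_measure_singleton_eq_ofReal_div hp_nonneg hzero hlaw
  have h_real : ∀ n : ℕ, 1 ≤ n → (P.map (J 0)).real {(n : ℤ)} = p n / c := fun n hn => by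
    rw [measureReal_def, (hlaw n hn).1, ENNReal.toReal_ofReal (div_nonneg (hp_nonneg n hn) hc.le)]
  refine ae_tendsto_abs_sum_range_atTop_of_heavy_even_tail (κ := c⁻¹) hmeas hindep hident
    (measure_neg_singleton_of_law hlaw) ?_ hα₀.le hα₁ (inv_pos.2 hc) fun j hj => ?_
  · have h := h_real 1 le_rfl
    rw [hpdef 1 le_rfl, if_neg (by decide)] at h
    simp only [Nat.cast_one, one_rpow] at h
    exact h ▸ one_div_pos.2 hc
  · have h := h_real (2 * j) (by omega)
    rw [hpdef (2 * j) (by omega), if_pos (even_two_mul j)] at h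
    push_cast at h
    rw [h, div_eq_inv_mul]

/-- the symmetric random walk on ℤ with "multiple indices of
stability", whose jump distribution is `P(J₁ = ±n) = c⁻¹ pₙ` with
`p_{2n} = (2n)^{-α-1}`, `p_{2n-1} = (2n-1)^{-β-1}`, `0 < α < 1`, `β > 0`,
`P(J₁ = 0) = 0` and `c = 2∑_{n≥1} pₙ`, is transient. -/
theorem multiple_stability_walk_transient
    (α β : ℝ) (hα₀ : 0 < α) (hα₁ : α < 1) (hβ : 0 < β)
    (p : ℕ → ℝ)
    (hpdef : ∀ n : ℕ, 1 ≤ n →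
      p n = if Even n then (n : ℝ) ^ (-α - 1) else (n : ℝ) ^ (-β - 1))
    (c : ℝ) (hc : c = 2 * ∑' n : ℕ, p (n + 1))
    {Ω : Type*} [MeasurableSpace Ω] (P : Measure Ω) [IsProbabilityMeasure P]
    (J : ℕ → Ω → ℤ) (hmeas : ∀ k, Measurable (J k))
    (hindep : iIndepFun J P)
    (hident : ∀ k, Measure.map (J k) P = Measure.map (J 0) P)
    (hzero : P {ω | J 0 ω = 0} = 0)
    (hlaw : ∀ n : ℕ, 1 ≤ n →
      P {ω | J 0 ω = (n : ℤ)} = ENNReal.ofReal (p n / c) ∧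
      P {ω | J 0 ω = -(n : ℤ)} = ENNReal.ofReal (p n / c)) :
    ∀ᵐ ω ∂P, Tendsto (fun n : ℕ => |∑ k ∈ Finset.range n, J k ω|) atTop atTop :=
  multiple_stability_walk_transient_general α β hα₀ hα₁ p hpdef c P J hmeas hindep hident hzero hlaw
end
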